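/- arXiv:1510.08599 — 4 statements merged into one kernel-verified Lean document; each statement's English description precedes it below -/
import Mathlib

section
/- For all n \geq 2 and real \alpha, \beta, the identity ((\beta+n)/(2n)) (x+1 - 2(\beta+1)/(2n+\alpha+\beta)) P_{n-1}^{(\alpha,\beta)}(x) = ((x+1)^2(\alpha+n-1)/(4n)) P_{n-2}^{(\alpha,\beta+2)}(x) + ((\beta+1)/(\alpha+\beta+2n)) P_n^{(\alpha,\beta)}(x) holds as polynomials in x, provided 2n+\alpha+\beta \neq 0. -/
open Finset

/-- Generalized binomial coefficient `(a choose k)` for real `a`. -/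
noncomputable def genBinom (a : ℝ) (k : ℕ) : ℝ :=
  (∏ i ∈ Finset.range k, (a - i)) / (Nat.factorial k)

/-- Jacobi polynomial `P_n^{(α,β)}(x)` via the explicit formula. -/
noncomputable def jacobiP (n : ℕ) (α β x : ℝ) : ℝ :=
  ∑ k ∈ Finset.range (n + 1),
    genBinom ((n : ℝ) + α) (n - k) * genBinom ((n : ℝ) + β) k *
      ((x - 1) / 2) ^ k * ((x + 1) / 2) ^ (n - k)

lemma genBinom_zero (a : ℝ) : genBinom a 0 = 1 := by simp [genBinom]
lemma genBinom_one (a : ℝ) : genBinom a 1 = a := by simp [genBinom]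

lemma genBinom_succ_top (a : ℝ) (m : ℕ) :
    genBinom (a + 1) (m + 1) = (a + 1) * genBinom a m / (m + 1) := by
  unfold genBinom
  rw [Finset.prod_range_succ']
  simp only [Nat.cast_zero, sub_zero, Nat.factorial_succ, Nat.cast_mul, Nat.cast_add,
    Nat.cast_one]
  have h1 : ∏ i ∈ Finset.range m, (a + 1 - ((i:ℝ) + 1)) = ∏ i ∈ Finset.range m, (a - i) := by
    apply Finset.prod_congr rfl; intro i _; ring
  rw [h1]
  have : ((m:ℝ)+1) ≠ 0 := by positivity
  have : (Nat.factorial m : ℝ) ≠ 0 := by positivity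
  field_simp

lemma genBinom_succ_bot (a : ℝ) (m : ℕ) :
    genBinom a (m + 1) = (a - m) * genBinom a m / (m + 1) := by
  unfold genBinom
  rw [Finset.prod_range_succ]
  simp only [Nat.factorial_succ, Nat.cast_mul, Nat.cast_add, Nat.cast_one]
  have : ((m:ℝ)+1) ≠ 0 := by positivity
  have : (Nat.factorial m : ℝ) ≠ 0 := by positivity
  field_simp

lemma expand_left2 (m : ℕ) (x e f C0 : ℝ) (A : ℕ → ℝ) :
    C0 * (e * (x + 1) - f) * ∑ k ∈ Finset.range (m+2), A k * ((x-1)/2)^k * ((x+1)/2)^(m+1-k)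
    = ∑ k ∈ Finset.range (m+3),
        (C0 * ((2*e-f) * (if k ≤ m+1 then A k else 0) + f * (if 1 ≤ k then A (k-1) else 0)))
          * ((x-1)/2)^k * ((x+1)/2)^(m+2-k) := by
  have e1 : ∀ k ∈ Finset.range (m+2),
      C0*(e*(x+1)-f) * (A k * ((x-1)/2)^k * ((x+1)/2)^(m+1-k))
      = C0*(2*e-f)*(A k) * ((x-1)/2)^k * ((x+1)/2)^(m+2-k)
        + C0*f*(A k) * ((x-1)/2)^(k+1) * ((x+1)/2)^(m+2-(k+1)) := by
    intro k hk
    rw [Finset.mem_range] at hk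
    have h2 : m + 2 - k = (m + 1 - k) + 1 := by omega
    have h3 : m + 2 - (k+1) = m + 1 - k := by omega
    rw [h2, h3, pow_succ, pow_succ]
    ring
  have e2 : ∀ k ∈ Finset.range (m+3),
      (C0 * ((2*e-f) * (if k ≤ m+1 then A k else 0) + f * (if 1 ≤ k then A (k-1) else 0)))
          * ((x-1)/2)^k * ((x+1)/2)^(m+2-k)
      = (C0*(2*e-f)*(if k ≤ m+1 then A k else 0)) * ((x-1)/2)^k * ((x+1)/2)^(m+2-k)
        + (C0*f*(if 1 ≤ k then A (k-1) else 0)) * ((x-1)/2)^k * ((x+1)/2)^(m+2-k) := by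
    intro k _; ring
  rw [Finset.mul_sum, Finset.sum_congr rfl e1, Finset.sum_add_distrib,
    Finset.sum_congr rfl e2, Finset.sum_add_distrib]
  congr 1
  · conv_rhs => rw [Finset.sum_range_succ]
    rw [if_neg (by omega : ¬ (m + 2 ≤ m + 1))]
    simp only [mul_zero, zero_mul, add_zero]
    apply Finset.sum_congr rfl
    intro k hk
    rw [Finset.mem_range] at hk
    rw [if_pos (by omega : k ≤ m+1)]
  · conv_rhs => rw [Finset.sum_range_succ']
    simp only [Nat.add_sub_cancel, if_neg (by omega : ¬ (1 ≤ 0)), mul_zero, zero_mul, add_zero]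
    apply Finset.sum_congr rfl
    intro k hk
    rw [if_pos (by omega : 1 ≤ k + 1)]

lemma expand_right2 (m : ℕ) (x C1 : ℝ) (B : ℕ → ℝ) :
    (x+1)^2 * C1 * ∑ k ∈ Finset.range (m+1), B k * ((x-1)/2)^k * ((x+1)/2)^(m-k)
    = ∑ k ∈ Finset.range (m+3),
        (4 * C1 * (if k ≤ m then B k else 0)) * ((x-1)/2)^k * ((x+1)/2)^(m+2-k) := by
  conv_rhs => rw [Finset.sum_range_succ, Finset.sum_range_succ]
  rw [if_neg (by omega : ¬ (m+2 ≤ m)), if_neg (by omega : ¬ (m+1 ≤ m))]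
  simp only [mul_zero, zero_mul, add_zero]
  rw [Finset.mul_sum]
  apply Finset.sum_congr rfl
  intro k hk
  rw [Finset.mem_range] at hk
  rw [if_pos (by omega : k ≤ m)]
  have h2 : m + 2 - k = (m - k) + 2 := by omega
  rw [h2, pow_add]
  ring

lemma coeff_id2 (m k : ℕ) (hk : k < m + 3) (α β : ℝ) :
    (β + ((m:ℝ)+2)) *
      ((2*(2*((m:ℝ)+2)+α+β) - 2*(β+1)) *
        (if k ≤ m+1 then genBinom ((m:ℝ)+1+α) (m+1-k) * genBinom ((m:ℝ)+1+β) k else 0)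
       + 2*(β+1) *
        (if 1 ≤ k then genBinom ((m:ℝ)+1+α) (m+1-(k-1)) * genBinom ((m:ℝ)+1+β) (k-1) else 0))
    = 4 * ((2*((m:ℝ)+2)+α+β)*(α+((m:ℝ)+2)-1)/2) *
        (if k ≤ m then genBinom ((m:ℝ)+α) (m-k) * genBinom ((m:ℝ)+(β+2)) k else 0)
      + 2*((m:ℝ)+2)*(β+1) *
        (genBinom ((m:ℝ)+2+α) (m+2-k) * genBinom ((m:ℝ)+2+β) k) := by
  have hm1 : ((m:ℝ)+1) ≠ 0 := by positivity
  have hm2 : ((m:ℝ)+2) ≠ 0 := by positivity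
  by_cases hk0 : k = 0
  · subst hk0
    rw [if_pos (by omega : 0 ≤ m+1), if_neg (by omega : ¬ (1 ≤ 0)), if_pos (Nat.zero_le m)]
    simp only [Nat.sub_zero, genBinom_zero, mul_one]
    set P := genBinom ((m:ℝ)+α) m / (((m:ℝ)+1)*((m:ℝ)+2)) with hP
    have hG : genBinom ((m:ℝ)+α) m = ((m:ℝ)+1)*((m:ℝ)+2)*P := by
      rw [hP]; field_simp
    have t1 : genBinom ((m:ℝ)+1+α) (m+1) = ((m:ℝ)+α+1) * (((m:ℝ)+2)*P) := by
      rw [show (m:ℝ)+1+α = ((m:ℝ)+α)+1 by ring, genBinom_succ_top, hG]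
      field_simp
    have t2 : genBinom ((m:ℝ)+2+α) (m+2) = ((m:ℝ)+α+2) * (((m:ℝ)+α+1)*P) := by
      rw [show (m:ℝ)+2+α = ((m:ℝ)+1+α)+1 by ring, show m+2 = (m+1)+1 from rfl,
        genBinom_succ_top, t1]
      push_cast
      field_simp; ring
    rw [t2, t1, hG]
    ring
  · by_cases hkm2 : k = m+2
    · subst hkm2
      rw [if_neg (by omega : ¬ (m+2 ≤ m+1)), if_pos (by omega : 1 ≤ m+2),
        if_neg (by omega : ¬ (m+2 ≤ m))]
      rw [show m+2-1 = m+1 from rfl, show m+1-(m+1) = 0 from by omega,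
        show m+2-(m+2) = 0 from by omega]
      simp only [genBinom_zero, one_mul, mul_zero, zero_add]
      set R := genBinom ((m:ℝ)+1+β) (m+1) / ((m:ℝ)+2) with hR
      have hQ : genBinom ((m:ℝ)+1+β) (m+1) = ((m:ℝ)+2)*R := by
        rw [hR]; field_simp
      have t : genBinom ((m:ℝ)+2+β) (m+2) = ((m:ℝ)+β+2) * R := by
        rw [show (m:ℝ)+2+β = ((m:ℝ)+1+β)+1 by ring, show m+2 = (m+1)+1 from rfl,
          genBinom_succ_top, hQ]
        push_cast
        field_simp; ring
      rw [t, hQ]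
      ring
    · by_cases hkm1 : k = m+1
      · subst hkm1
        rw [if_pos (le_refl (m+1)), if_pos (by omega : 1 ≤ m+1),
          if_neg (by omega : ¬ (m+1 ≤ m))]
        rw [show m+1-(m+1) = 0 from by omega, show m+1-1 = m from rfl,
          show m+1-m = 1 from by omega, show m+2-(m+1) = 1 from by omega]
        simp only [genBinom_zero, genBinom_one, one_mul]
        set R := genBinom ((m:ℝ)+1+β) m / ((m:ℝ)+1) with hR
        have hQ : genBinom ((m:ℝ)+1+β) m = ((m:ℝ)+1)*R := by
          rw [hR]; field_simp
        have t1 : genBinom ((m:ℝ)+1+β) (m+1) = (β+1) * R := by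
          rw [genBinom_succ_bot ((m:ℝ)+1+β) m, hQ]
          field_simp; ring
        have t2 : genBinom ((m:ℝ)+2+β) (m+1) = ((m:ℝ)+β+2) * R := by
          rw [show (m:ℝ)+2+β = ((m:ℝ)+1+β)+1 by ring, genBinom_succ_top, hQ]
          field_simp; ring
        rw [t1, t2, hQ]
        ring
      · -- general case : 1 ≤ k ≤ m
        obtain ⟨l, rfl⟩ : ∃ l, k = l + 1 := ⟨k - 1, by omega⟩
        obtain ⟨j, rfl⟩ : ∃ j, m = l + 1 + j := ⟨m - l - 1, by omega⟩
        rw [if_pos (by omega : l+1 ≤ l+1+j+1), if_pos (by omega : 1 ≤ l+1),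
          if_pos (by omega : l+1 ≤ l+1+j)]
        rw [show l+1+j+1-(l+1) = j+1 from by omega, show l+1-1 = l from rfl,
          show l+1+j+1-l = j+2 from by omega, show l+1+j-(l+1) = j from by omega,
          show l+1+j+2-(l+1) = j+2 from by omega]
        push_cast at hm1 hm2 ⊢
        have hj1 : ((j:ℝ)+1) ≠ 0 := by positivity
        have hj2 : ((j:ℝ)+2) ≠ 0 := by positivity
        have hl1 : ((l:ℝ)+1) ≠ 0 := by positivity
        set P := genBinom ((l:ℝ)+1+(j:ℝ)+α) j / (((j:ℝ)+1)*((j:ℝ)+2)) with hP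
        set R := genBinom ((l:ℝ)+1+(j:ℝ)+1+β) l / ((l:ℝ)+1) with hR
        have hG : genBinom ((l:ℝ)+1+(j:ℝ)+α) j = ((j:ℝ)+1)*((j:ℝ)+2)*P := by
          rw [hP]; field_simp
        have hQ : genBinom ((l:ℝ)+1+(j:ℝ)+1+β) l = ((l:ℝ)+1)*R := by
          rw [hR]; field_simp
        have hV1 : genBinom ((l:ℝ)+1+(j:ℝ)+1+α) (j+1)
            = ((l:ℝ)+(j:ℝ)+α+2) * (((j:ℝ)+2)*P) := by
          rw [show (l:ℝ)+1+(j:ℝ)+1+α = ((l:ℝ)+1+(j:ℝ)+α)+1 by ring, genBinom_succ_top, hG]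
          field_simp; ring
        have hV2 : genBinom ((l:ℝ)+1+(j:ℝ)+1+α) (j+2)
            = ((l:ℝ)+1+α) * (((l:ℝ)+(j:ℝ)+α+2)*P) := by
          rw [show j+2 = (j+1)+1 from rfl, genBinom_succ_bot, hV1]
          push_cast
          field_simp; ring
        have hV3 : genBinom ((l:ℝ)+1+(j:ℝ)+2+α) (j+2)
            = ((l:ℝ)+(j:ℝ)+α+3) * (((l:ℝ)+(j:ℝ)+α+2)*P) := by
          rw [show (l:ℝ)+1+(j:ℝ)+2+α = ((l:ℝ)+1+(j:ℝ)+1+α)+1 by ring,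
            show j+2 = (j+1)+1 from rfl, genBinom_succ_top, hV1]
          push_cast
          field_simp; ring
        have hW1 : genBinom ((l:ℝ)+1+(j:ℝ)+1+β) (l+1)
            = ((j:ℝ)+β+2) * R := by
          rw [genBinom_succ_bot ((l:ℝ)+1+(j:ℝ)+1+β) l, hQ]
          field_simp; ring
        have hW2 : genBinom ((l:ℝ)+1+(j:ℝ)+2+β) (l+1)
            = ((l:ℝ)+(j:ℝ)+β+3) * R := by
          rw [show (l:ℝ)+1+(j:ℝ)+2+β = ((l:ℝ)+1+(j:ℝ)+1+β)+1 by ring, genBinom_succ_top, hQ]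
          field_simp; ring
        have hW2' : genBinom ((l:ℝ)+1+(j:ℝ)+(β+2)) (l+1)
            = ((l:ℝ)+(j:ℝ)+β+3) * R := by
          rw [show (l:ℝ)+1+(j:ℝ)+(β+2) = ((l:ℝ)+1+(j:ℝ)+1+β)+1 by ring, genBinom_succ_top, hQ]
          field_simp; ring
        rw [hV2, hV3, hV1, hW1, hW2, hW2', hG, hQ]
        ring
theorem jacobi_mixed_recurrence_n2b2 (n : ℕ) (hn : 2 ≤ n) (α β : ℝ)
    (h : 2 * (n : ℝ) + α + β ≠ 0) (x : ℝ) :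
    ((β + (n : ℝ)) / (2 * (n : ℝ))) *
        (x + 1 - 2 * (β + 1) / (2 * (n : ℝ) + α + β)) * jacobiP (n - 1) α β x =
      ((x + 1) ^ 2 * (α + (n : ℝ) - 1) / (4 * (n : ℝ))) * jacobiP (n - 2) α (β + 2) x +
        ((β + 1) / (α + β + 2 * (n : ℝ))) * jacobiP n α β x := by
  obtain ⟨m, rfl⟩ : ∃ m, n = m + 2 := ⟨n - 2, by omega⟩
  simp only [jacobiP, show m+2-1 = m+1 from rfl, show m+2-2 = m from rfl]
  push_cast at h ⊢
  rw [show m+1+1 = m+2 from rfl, show m+2+1 = m+3 from rfl]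
  have hm2 : ((m:ℝ)+2) ≠ 0 := by positivity
  have h' : α+β+2*((m:ℝ)+2) ≠ 0 := fun hc => h (by linarith)
  have hM : (2*((m:ℝ)+2)) * (2*((m:ℝ)+2)+α+β) ≠ 0 := mul_ne_zero (by positivity) h
  apply mul_left_cancel₀ hM
  set S1 := ∑ k ∈ Finset.range (m+2),
      genBinom ((m:ℝ)+1+α) (m+1-k) * genBinom ((m:ℝ)+1+β) k *
        ((x-1)/2)^k * ((x+1)/2)^(m+1-k) with hS1
  set S2 := ∑ k ∈ Finset.range (m+1),
      genBinom ((m:ℝ)+α) (m-k) * genBinom ((m:ℝ)+(β+2)) k *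
        ((x-1)/2)^k * ((x+1)/2)^(m-k) with hS2
  set S3 := ∑ k ∈ Finset.range (m+3),
      genBinom ((m:ℝ)+2+α) (m+2-k) * genBinom ((m:ℝ)+2+β) k *
        ((x-1)/2)^k * ((x+1)/2)^(m+2-k) with hS3
  have tL : (2*((m:ℝ)+2)) * (2*((m:ℝ)+2)+α+β) *
        ((β+((m:ℝ)+2))/(2*((m:ℝ)+2)) * (x+1-2*(β+1)/(2*((m:ℝ)+2)+α+β)) * S1)
      = (β+((m:ℝ)+2)) * ((2*((m:ℝ)+2)+α+β) * (x+1) - 2*(β+1)) * S1 := by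
    field_simp
    try ring
    try tauto
  have tR : (2*((m:ℝ)+2)) * (2*((m:ℝ)+2)+α+β) *
        ((x+1)^2*(α+((m:ℝ)+2)-1)/(4*((m:ℝ)+2)) * S2 + (β+1)/(α+β+2*((m:ℝ)+2)) * S3)
      = (x+1)^2 * ((2*((m:ℝ)+2)+α+β)*(α+((m:ℝ)+2)-1)/2) * S2
        + (2*((m:ℝ)+2)*(β+1)) * S3 := by
    field_simp
    try ring
    try tauto
  rw [tL, tR, hS1, hS2, hS3]
  rw [expand_left2 m x (2*((m:ℝ)+2)+α+β) (2*(β+1)) (β+((m:ℝ)+2))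
      (fun k => genBinom ((m:ℝ)+1+α) (m+1-k) * genBinom ((m:ℝ)+1+β) k)]
  rw [expand_right2 m x ((2*((m:ℝ)+2)+α+β)*(α+((m:ℝ)+2)-1)/2)
      (fun k => genBinom ((m:ℝ)+α) (m-k) * genBinom ((m:ℝ)+(β+2)) k)]
  rw [Finset.mul_sum, ← Finset.sum_add_distrib]
  apply Finset.sum_congr rfl
  intro k hk
  rw [Finset.mem_range] at hk
  linear_combination ((x-1)/2)^k * ((x+1)/2)^(m+2-k) * coeff_id2 m k hk α β
end

section
/- Let \alpha, \beta be real with \alpha+\beta+n \neq 0 for all 1 \leq k \leq n and suppose the three-term recurrence coefficients are well-defined (2k+\alpha+\beta, 2k+\alpha+\beta-1, 2k+\alpha+\beta-2 nonzero for 2 \leq k \leq n). If \alpha > -1 and -2 < \beta < -1, then for every n \geq 1 the polynomials P_n^{(\alpha,\beta)} and P_{n-1}^{(\alpha,\beta)} have no common real zero. -/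
open Finset

namespace JacobiAux

noncomputable def Gp (γ : ℝ) (j : ℕ) : ℝ := ∏ t ∈ Finset.range j, ((t : ℝ) + 1 + γ)

lemma Gp_succ (γ : ℝ) (j : ℕ) : Gp γ (j + 1) = Gp γ j * ((j : ℝ) + 1 + γ) := by
  simp [Gp, Finset.prod_range_succ]

lemma prod_shift (γ : ℝ) {j m : ℕ} (h : j ≤ m) :
    ∏ i ∈ Finset.range (m - j), ((m : ℝ) + γ - i) = ∏ t ∈ Finset.Ico j m, ((t : ℝ) + 1 + γ) := by
  rw [Finset.prod_Ico_eq_prod_range]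
  rw [← Finset.prod_range_reflect (fun i => ((j + i : ℕ) : ℝ) + 1 + γ) (m - j)]
  apply Finset.prod_congr rfl
  intro i hi
  rw [Finset.mem_range] at hi
  have h1 : j + (m - j - 1 - i) = m - 1 - i := by omega
  rw [h1]
  have h2 : ((m - 1 - i : ℕ) : ℝ) = (m : ℝ) - 1 - i := by
    rw [show m - 1 - i = m - (1 + i) from by omega, Nat.cast_sub (by omega)]
    push_cast; ring
  rw [h2]; ring

lemma genBinom_eq_G (γ : ℝ) {j m : ℕ} (h : j ≤ m) (hG : ∀ r, Gp γ r ≠ 0) :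
    genBinom ((m : ℝ) + γ) (m - j) = Gp γ m / (Gp γ j * (Nat.factorial (m - j) : ℝ)) := by
  have hI : ∏ t ∈ Finset.Ico j m, ((t : ℝ) + 1 + γ) = Gp γ m / Gp γ j := by
    rw [eq_div_iff (hG j), mul_comm]
    exact Finset.prod_range_mul_prod_Ico _ h
  rw [genBinom, prod_shift γ h, hI, div_div]

noncomputable def co (α β : ℝ) (m j : ℕ) : ℝ :=
  genBinom ((m : ℝ) + α) (m - j) * genBinom ((m : ℝ) + β) j

lemma co_eq (α β : ℝ) (hGα : ∀ r, Gp α r ≠ 0) (hGβ : ∀ r, Gp β r ≠ 0)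
    {m j : ℕ} (h : j ≤ m) :
    co α β m j = (Gp α m * Gp β m) /
      (Gp α j * Gp β (m - j) * (Nat.factorial (m - j) : ℝ) * (Nat.factorial j : ℝ)) := by
  have h2 := genBinom_eq_G β (Nat.sub_le m j) hGβ
  rw [show m - (m - j) = j from by omega] at h2
  rw [co, genBinom_eq_G α h hGα, h2]
  have f1 : (Nat.factorial (m - j) : ℝ) ≠ 0 := Nat.cast_ne_zero.mpr (Nat.factorial_ne_zero _)
  have f2 : (Nat.factorial j : ℝ) ≠ 0 := Nat.cast_ne_zero.mpr (Nat.factorial_ne_zero _)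
  field_simp

lemma Gp_alpha_ne {α : ℝ} (hα : -1 < α) (r : ℕ) : Gp α r ≠ 0 := by
  have : 0 < Gp α r := Finset.prod_pos fun t _ => by
    have : (0:ℝ) ≤ t := Nat.cast_nonneg t
    linarith
  exact ne_of_gt this

lemma Gp_beta_ne {β : ℝ} (hβ1 : -2 < β) (hβ2 : β < -1) (r : ℕ) : Gp β r ≠ 0 := by
  rw [Gp, Finset.prod_ne_zero_iff]
  intro t _
  rcases Nat.eq_zero_or_pos t with h | h
  · subst h; simp; intro hc; linarith
  · have : (1:ℝ) ≤ t := by exact_mod_cast h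
    intro hc; linarith


set_option maxHeartbeats 1000000

section Terms

variable {α β : ℝ} (hα : -1 < α) (hβ1 : -2 < β) (hβ2 : β < -1) (m k : ℕ)

/-- The common factor `E` in all coefficient identities. -/
noncomputable def Ef (α β : ℝ) (m k : ℕ) : ℝ :=
  (Gp α m * Gp β m) /
    (Gp α k * Gp β (m + 2 - k) * (Nat.factorial (m + 2 - k) : ℝ) * (Nat.factorial k : ℝ))

lemma fac_ne (r : ℕ) : (Nat.factorial r : ℝ) ≠ 0 := Nat.cast_ne_zero.mpr (Nat.factorial_ne_zero _)

lemma den_ne {α β : ℝ} (hα : -1 < α) (hβ1 : -2 < β) (hβ2 : β < -1) (a b c d : ℕ) :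
    Gp α a * Gp β b * (Nat.factorial c : ℝ) * (Nat.factorial d : ℝ) ≠ 0 :=
  mul_ne_zero (mul_ne_zero (mul_ne_zero (Gp_alpha_ne hα a) (Gp_beta_ne hβ1 hβ2 b))
    (fac_ne c)) (fac_ne d)

include hα hβ1 hβ2

lemma L_top (hk : k ≤ m + 2) :
    co α β (m + 2) k = Ef α β m k *
      (((m:ℝ) + 2 + α) * ((m:ℝ) + 1 + α) * (((m:ℝ) + 2 + β) * ((m:ℝ) + 1 + β))) := by
  have hGα := Gp_alpha_ne hα
  have hGβ := Gp_beta_ne hβ1 hβ2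
  rw [co_eq α β hGα hGβ hk, Ef, div_mul_eq_mul_div,
    div_eq_div_iff (den_ne hα hβ1 hβ2 _ _ _ _) (den_ne hα hβ1 hβ2 _ _ _ _)]
  rw [show m + 2 = (m + 1) + 1 from rfl, Gp_succ, Gp_succ, Gp_succ β, Gp_succ β]
  push_cast
  ring

lemma L_mid0 (hk : k ≤ m + 2) :
    (if k ≤ m + 1 then co α β (m + 1) k else 0) = Ef α β m k *
      (((m:ℝ) + 1 + α) * ((m:ℝ) + 1 + β) * (((m:ℝ) + 2 - k + β) * ((m:ℝ) + 2 - k))) := by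
  have hGα := Gp_alpha_ne hα
  have hGβ := Gp_beta_ne hβ1 hβ2
  by_cases h : k ≤ m + 1
  · rw [if_pos h, co_eq α β hGα hGβ h, Ef]
    obtain ⟨d, hd⟩ : ∃ d, m + 1 = k + d := ⟨m + 1 - k, by omega⟩
    have hdr : (m:ℝ) + 1 = (k:ℝ) + d := by exact_mod_cast congrArg (Nat.cast : ℕ → ℝ) hd
    rw [show m + 1 - k = d from by omega, show m + 2 - k = d + 1 from by omega]
    rw [show (m:ℝ) + 2 - (k:ℝ) = (d:ℝ) + 1 from by linarith]
    rw [div_mul_eq_mul_div,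
      div_eq_div_iff (den_ne hα hβ1 hβ2 _ _ _ _) (den_ne hα hβ1 hβ2 _ _ _ _)]
    rw [Gp_succ α m, Gp_succ β m, Gp_succ β d, Nat.factorial_succ d]
    push_cast
    ring
  · rw [if_neg h, show (k:ℝ) = (m:ℝ) + 2 from by
      rw [show k = m + 2 from by omega]; push_cast; ring]
    ring

lemma L_mid1 (hk : k ≤ m + 2) :
    (if k = 0 then 0 else co α β (m + 1) (k - 1)) = Ef α β m k *
      (((m:ℝ) + 1 + α) * ((m:ℝ) + 1 + β) * (((k:ℝ) + α) * (k:ℝ))) := by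
  have hGα := Gp_alpha_ne hα
  have hGβ := Gp_beta_ne hβ1 hβ2
  by_cases h : k = 0
  · rw [if_pos h, h]; push_cast; ring
  · obtain ⟨j, rfl⟩ : ∃ j, k = j + 1 := ⟨k - 1, by omega⟩
    rw [if_neg h, show j + 1 - 1 = j from rfl,
      co_eq α β hGα hGβ (show j ≤ m + 1 from by omega), Ef]
    obtain ⟨d, hd⟩ : ∃ d, m + 1 = j + d := ⟨m + 1 - j, by omega⟩
    rw [show m + 1 - j = d from by omega, show m + 2 - (j + 1) = d from by omega]
    rw [div_mul_eq_mul_div,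
      div_eq_div_iff (den_ne hα hβ1 hβ2 _ _ _ _) (den_ne hα hβ1 hβ2 _ _ _ _)]
    rw [Gp_succ α m, Gp_succ β m, Gp_succ α j, Nat.factorial_succ j]
    push_cast
    ring


lemma L_b0 (hk : k ≤ m + 2) :
    (if k ≤ m then co α β m k else 0) = Ef α β m k *
      (((m:ℝ) + 2 - k + β) * ((m:ℝ) + 1 - k + β) * (((m:ℝ) + 2 - k) * ((m:ℝ) + 1 - k))) := by
  have hGα := Gp_alpha_ne hα
  have hGβ := Gp_beta_ne hβ1 hβ2
  by_cases h : k ≤ m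
  · rw [if_pos h, co_eq α β hGα hGβ h, Ef]
    obtain ⟨d, hd⟩ : ∃ d, m = k + d := ⟨m - k, by omega⟩
    have hdr : (m:ℝ) = (k:ℝ) + d := by exact_mod_cast congrArg (Nat.cast : ℕ → ℝ) hd
    rw [show m - k = d from by omega, show m + 2 - k = d + 2 from by omega]
    rw [show (m:ℝ) + 2 - (k:ℝ) = (d:ℝ) + 2 from by linarith,
      show (m:ℝ) + 1 - (k:ℝ) = (d:ℝ) + 1 from by linarith]
    rw [div_mul_eq_mul_div,
      div_eq_div_iff (den_ne hα hβ1 hβ2 _ _ _ _) (den_ne hα hβ1 hβ2 _ _ _ _)]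
    rw [show d + 2 = (d + 1) + 1 from rfl, Gp_succ β, Gp_succ β d,
      Nat.factorial_succ (d+1), Nat.factorial_succ d]
    push_cast
    ring
  · rw [if_neg h]
    have h2 : k = m + 1 ∨ k = m + 2 := by omega
    have hc : (k:ℝ) = (m:ℝ) + 1 ∨ (k:ℝ) = (m:ℝ) + 2 := by
      rcases h2 with h2 | h2 <;> [left; right] <;> rw [h2] <;> push_cast <;> ring
    rcases hc with hc | hc <;> rw [hc] <;> ring

lemma L_b1 (hk : k ≤ m + 2) :
    (if 1 ≤ k ∧ k ≤ m + 1 then co α β m (k - 1) else 0) = Ef α β m k *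
      (((k:ℝ) + α) * (k:ℝ) * (((m:ℝ) + 2 - k + β) * ((m:ℝ) + 2 - k))) := by
  have hGα := Gp_alpha_ne hα
  have hGβ := Gp_beta_ne hβ1 hβ2
  by_cases h : 1 ≤ k ∧ k ≤ m + 1
  · obtain ⟨j, rfl⟩ : ∃ j, k = j + 1 := ⟨k - 1, by omega⟩
    rw [if_pos h, show j + 1 - 1 = j from rfl,
      co_eq α β hGα hGβ (show j ≤ m from by omega), Ef]
    obtain ⟨d, hd⟩ : ∃ d, m = j + d := ⟨m - j, by omega⟩
    have hdr : (m:ℝ) = (j:ℝ) + d := by exact_mod_cast congrArg (Nat.cast : ℕ → ℝ) hd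
    rw [show m - j = d from by omega, show m + 2 - (j + 1) = d + 1 from by omega]
    have hc : (m:ℝ) + 2 - ((j:ℕ):ℝ) - 1 = (d:ℝ) + 1 := by linarith
    rw [div_mul_eq_mul_div,
      div_eq_div_iff (den_ne hα hβ1 hβ2 _ _ _ _) (den_ne hα hβ1 hβ2 _ _ _ _)]
    rw [Gp_succ α j, Gp_succ β d, Nat.factorial_succ j, Nat.factorial_succ d]
    push_cast
    rw [show (m:ℝ) + 2 - ((j:ℝ) + 1) = (d:ℝ) + 1 from by linarith]
    ring
  · rw [if_neg h]
    have h2 : k = 0 ∨ k = m + 2 := by omega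
    rcases h2 with h2 | h2
    · rw [h2]; push_cast; ring
    · rw [show (k:ℝ) = (m:ℝ) + 2 from by rw [h2]; push_cast; ring]; ring

lemma L_b2 (hk : k ≤ m + 2) :
    (if 2 ≤ k then co α β m (k - 2) else 0) = Ef α β m k *
      (((k:ℝ) + α) * ((k:ℝ) - 1 + α) * ((k:ℝ) * ((k:ℝ) - 1))) := by
  have hGα := Gp_alpha_ne hα
  have hGβ := Gp_beta_ne hβ1 hβ2
  by_cases h : 2 ≤ k
  · obtain ⟨j, rfl⟩ : ∃ j, k = j + 2 := ⟨k - 2, by omega⟩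
    rw [if_pos h, show j + 2 - 2 = j from rfl,
      co_eq α β hGα hGβ (show j ≤ m from by omega), Ef]
    obtain ⟨d, hd⟩ : ∃ d, m = j + d := ⟨m - j, by omega⟩
    rw [show m - j = d from by omega, show m + 2 - (j + 2) = d from by omega]
    rw [div_mul_eq_mul_div,
      div_eq_div_iff (den_ne hα hβ1 hβ2 _ _ _ _) (den_ne hα hβ1 hβ2 _ _ _ _)]
    rw [show j + 2 = (j + 1) + 1 from rfl, Gp_succ α, Gp_succ α j,
      Nat.factorial_succ (j+1), Nat.factorial_succ j]
    push_cast
    ring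
  · rw [if_neg h]
    have h2 : k = 0 ∨ k = 1 := by omega
    rcases h2 with h2 | h2 <;> (rw [h2]; push_cast; ring)

end Terms


section Main

variable {α β : ℝ} (hα : -1 < α) (hβ1 : -2 < β) (hβ2 : β < -1)

noncomputable def ccf (α β : ℝ) (m : ℕ) : ℝ :=
  2 * ((m:ℝ) + 2) * (((m:ℝ) + 2) + α + β) * (2 * ((m:ℝ) + 2) + α + β - 2)
noncomputable def KKf (α β : ℝ) (m : ℕ) : ℝ :=
  (2 * ((m:ℝ) + 2) + α + β - 1) * (2 * ((m:ℝ) + 2) + α + β) * (2 * ((m:ℝ) + 2) + α + β - 2)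
noncomputable def MMf (α β : ℝ) (m : ℕ) : ℝ :=
  (2 * ((m:ℝ) + 2) + α + β - 1) * (α ^ 2 - β ^ 2)
noncomputable def eef (α β : ℝ) (m : ℕ) : ℝ :=
  2 * (((m:ℝ) + 2) + α - 1) * (((m:ℝ) + 2) + β - 1) * (2 * ((m:ℝ) + 2) + α + β)

include hα hβ1 hβ2

lemma coeffId (m k : ℕ) (hk : k ≤ m + 2) :
    ccf α β m * co α β (m + 2) k =
      KKf α β m * ((if k = 0 then 0 else co α β (m + 1) (k - 1)) +
        (if k ≤ m + 1 then co α β (m + 1) k else 0)) +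
      MMf α β m * ((if k ≤ m + 1 then co α β (m + 1) k else 0) -
        (if k = 0 then 0 else co α β (m + 1) (k - 1))) -
      eef α β m * ((if k ≤ m then co α β m k else 0) -
        2 * (if 1 ≤ k ∧ k ≤ m + 1 then co α β m (k - 1) else 0) +
        (if 2 ≤ k then co α β m (k - 2) else 0)) := by
  rw [L_top hα hβ1 hβ2 m k hk, L_mid0 hα hβ1 hβ2 m k hk, L_mid1 hα hβ1 hβ2 m k hk,
    L_b0 hα hβ1 hβ2 m k hk, L_b1 hα hβ1 hβ2 m k hk, L_b2 hα hβ1 hβ2 m k hk,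
    ccf, KKf, MMf, eef]
  ring

end Main


section Sums

variable (α β : ℝ) (u v : ℝ) (m : ℕ)

lemma L1u : u * (∑ j ∈ Finset.range (m+1+1), co α β (m+1) j * u^j * v^(m+1-j)) =
    ∑ k ∈ Finset.range (m+2+1),
      (if k = 0 then 0 else co α β (m+1) (k-1)) * u^k * v^(m+2-k) := by
  rw [Finset.mul_sum, Finset.sum_range_succ'
    (fun k => (if k = 0 then (0:ℝ) else co α β (m+1) (k-1)) * u^k * v^(m+2-k)) (m+2)]
  simp only [Nat.add_sub_cancel, Nat.succ_ne_zero, if_false, reduceIte, zero_mul, add_zero]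
  rw [show m+2 = m+1+1 from rfl]
  refine Finset.sum_congr rfl fun j hj => ?_
  rw [show m+1+1-(j+1) = m+1-j from by omega]
  ring

lemma L1v : v * (∑ j ∈ Finset.range (m+1+1), co α β (m+1) j * u^j * v^(m+1-j)) =
    ∑ k ∈ Finset.range (m+2+1),
      (if k ≤ m+1 then co α β (m+1) k else 0) * u^k * v^(m+2-k) := by
  rw [Finset.mul_sum, Finset.sum_range_succ
    (fun k => (if k ≤ m+1 then co α β (m+1) k else 0) * u^k * v^(m+2-k)) (m+2)]
  rw [if_neg (by omega), zero_mul, zero_mul, add_zero, show m+2 = m+1+1 from rfl]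
  refine Finset.sum_congr rfl fun j hj => ?_
  rw [Finset.mem_range] at hj
  rw [if_pos (by omega), show m+1+1-j = (m+1-j)+1 from by omega]
  ring

lemma L0vv : v * (v * ∑ j ∈ Finset.range (m+1), co α β m j * u^j * v^(m-j)) =
    ∑ k ∈ Finset.range (m+2+1),
      (if k ≤ m then co α β m k else 0) * u^k * v^(m+2-k) := by
  rw [Finset.mul_sum, Finset.mul_sum, Finset.sum_range_succ
    (fun k => (if k ≤ m then co α β m k else 0) * u^k * v^(m+2-k)) (m+2)]
  rw [if_neg (by omega), zero_mul, zero_mul, add_zero, show m+2 = m+1+1 from rfl,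
    Finset.sum_range_succ
    (fun k => (if k ≤ m then co α β m k else 0) * u^k * v^(m+1+1-k)) (m+1)]
  rw [if_neg (by omega), zero_mul, zero_mul, add_zero]
  refine Finset.sum_congr rfl fun j hj => ?_
  rw [Finset.mem_range] at hj
  rw [if_pos (by omega), show m+1+1-j = (m-j)+1+1 from by omega]
  ring

lemma L0uv : u * (v * ∑ j ∈ Finset.range (m+1), co α β m j * u^j * v^(m-j)) =
    ∑ k ∈ Finset.range (m+2+1),
      (if 1 ≤ k ∧ k ≤ m+1 then co α β m (k-1) else 0) * u^k * v^(m+2-k) := by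
  rw [Finset.mul_sum, Finset.mul_sum, Finset.sum_range_succ'
    (fun k => (if 1 ≤ k ∧ k ≤ m+1 then co α β m (k-1) else 0) * u^k * v^(m+2-k)) (m+2)]
  rw [if_neg (by omega), zero_mul, zero_mul, add_zero, show m+2 = m+1+1 from rfl,
    Finset.sum_range_succ
    (fun i => (if 1 ≤ i+1 ∧ i+1 ≤ m+1 then co α β m (i+1-1) else 0) * u^(i+1) * v^(m+1+1-(i+1)))
    (m+1)]
  rw [if_neg (by omega), zero_mul, zero_mul, add_zero]
  refine Finset.sum_congr rfl fun j hj => ?_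
  rw [Finset.mem_range] at hj
  rw [if_pos (by omega), show j+1-1 = j from rfl, show m+1+1-(j+1) = (m-j)+1 from by omega]
  ring

lemma L0uu : u * (u * ∑ j ∈ Finset.range (m+1), co α β m j * u^j * v^(m-j)) =
    ∑ k ∈ Finset.range (m+2+1),
      (if 2 ≤ k then co α β m (k-2) else 0) * u^k * v^(m+2-k) := by
  rw [Finset.mul_sum, Finset.mul_sum, Finset.sum_range_succ'
    (fun k => (if 2 ≤ k then co α β m (k-2) else 0) * u^k * v^(m+2-k)) (m+2)]
  rw [if_neg (by omega), zero_mul, zero_mul, add_zero, show m+2 = m+1+1 from rfl,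
    Finset.sum_range_succ'
    (fun i => (if 2 ≤ i+1 then co α β m (i+1-2) else 0) * u^(i+1) * v^(m+1+1-(i+1)))
    (m+1)]
  rw [if_neg (by omega), zero_mul, zero_mul, add_zero]
  refine Finset.sum_congr rfl fun j hj => ?_
  rw [Finset.mem_range] at hj
  rw [if_pos (by omega), show j+1+1-2 = j from by omega,
    show m+1+1-(j+1+1) = m-j from by omega]
  ring

end Sums


section Rec

variable {α β : ℝ} (hα : -1 < α) (hβ1 : -2 < β) (hβ2 : β < -1)

include hα hβ1 hβ2

lemma rec_aux (m : ℕ) (u v x : ℝ) (hx : x = u + v) (h1 : v - u = 1) :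
    ccf α β m * ∑ k ∈ Finset.range (m+2+1), co α β (m+2) k * u^k * v^(m+2-k) =
      (KKf α β m * x + MMf α β m) *
        (∑ j ∈ Finset.range (m+1+1), co α β (m+1) j * u^j * v^(m+1-j)) -
      eef α β m * (∑ j ∈ Finset.range (m+1), co α β m j * u^j * v^(m-j)) := by
  subst hx
  have expand : ∀ S1 S0 : ℝ,
      (KKf α β m * (u + v) + MMf α β m) * S1 - eef α β m * S0 =
        KKf α β m * (u * S1) + KKf α β m * (v * S1) + MMf α β m * (v * S1) -
          MMf α β m * (u * S1) -
          (eef α β m * (v * (v * S0)) - 2 * (eef α β m * (u * (v * S0))) +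
            eef α β m * (u * (u * S0))) := by
    intro S1 S0
    linear_combination (eef α β m * S0 * (v - u + 1) - MMf α β m * S1) * h1
  rw [expand, L1u, L1v, L0vv, L0uv, L0uu]
  simp only [Finset.mul_sum, ← Finset.sum_add_distrib, ← Finset.sum_sub_distrib]
  refine Finset.sum_congr rfl fun k hk => ?_
  rw [Finset.mem_range] at hk
  have h := coeffId hα hβ1 hβ2 m k (by omega)
  linear_combination (u^k * v^(m+2-k)) * h

lemma jacobiP_rec (m : ℕ) (x : ℝ) :
    ccf α β m * jacobiP (m+2) α β x =
      (KKf α β m * x + MMf α β m) * jacobiP (m+1) α β x -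
        eef α β m * jacobiP m α β x := by
  have hjac : ∀ r : ℕ, jacobiP r α β x =
      ∑ j ∈ Finset.range (r+1), co α β r j * ((x-1)/2)^j * ((x+1)/2)^(r-j) := fun r => rfl
  rw [hjac (m+2), hjac (m+1), hjac m]
  exact rec_aux hα hβ1 hβ2 m ((x-1)/2) ((x+1)/2) x (by ring) (by ring)

lemma eef_ne (m : ℕ) : eef α β m ≠ 0 := by
  rw [eef]
  have h0 : (0:ℝ) ≤ (m:ℝ) := Nat.cast_nonneg m
  have h2 : ((m:ℝ) + 2) + α - 1 ≠ 0 := by nlinarith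
  have h4 : 2 * ((m:ℝ) + 2) + α + β ≠ 0 := by nlinarith
  have h3 : ((m:ℝ) + 2) + β - 1 ≠ 0 := by
    rcases Nat.eq_zero_or_pos m with h | h
    · subst h; push_cast; intro hc; nlinarith
    · have : (1:ℝ) ≤ (m:ℝ) := by exact_mod_cast h
      nlinarith
  positivity

omit hα hβ1 hβ2 in
lemma jacobiP_zero (x : ℝ) : jacobiP 0 α β x = 1 := by
  simp [jacobiP, genBinom]

lemma no_common_zero : ∀ m : ℕ, ∀ x : ℝ,
    jacobiP (m+1) α β x = 0 → jacobiP m α β x = 0 → False := by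
  intro m
  induction m with
  | zero =>
    intro x _ h0
    rw [jacobiP_zero (α := α) (β := β)] at h0
    exact one_ne_zero h0
  | succ p ih =>
    intro x h2 h1
    apply ih x h1
    have hrec := jacobiP_rec hα hβ1 hβ2 p x
    rw [h1, show p + 1 + 1 = p + 2 from rfl, h2] at hrec
    have : eef α β p * jacobiP p α β x = 0 := by linarith [hrec]
    rcases mul_eq_zero.mp this with h | h
    · exact absurd h (eef_ne hα hβ1 hβ2 p)
    · exact h

end Rec

end JacobiAux

theorem jacobi_consecutive_coprime (α β : ℝ)
    (hα : -1 < α) (hβ1 : -2 < β) (hβ2 : β < -1) :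
    ∀ n : ℕ, 1 ≤ n →
      ¬ ∃ x : ℝ, jacobiP n α β x = 0 ∧ jacobiP (n - 1) α β x = 0 := by
  intro n hn
  rintro ⟨x, h1, h2⟩
  obtain ⟨m, rfl⟩ : ∃ m, n = m + 1 := ⟨n - 1, by omega⟩
  rw [Nat.add_sub_cancel] at h2
  exact JacobiAux.no_common_zero hα hβ1 hβ2 m x h1 h2
end

section
/- Let \alpha > -1 and -2 < \beta < -1. For every n \geq 1, if x_{1,n+1} < -1 < x_{2,n+1} < \dots < x_{n+1,n+1} are the zeros of P_{n+1}^{(\alpha,\beta)} and x_{1,n} < -1 < x_{2,n} < \dots < x_{n,n} are the zeros of P_n^{(\alpha,\beta)} (all real and simple, with exactly one zero below -1 and the rest in (-1,1)), then x_{1,n} < x_{1,n+1} < -1 < x_{2,n+1} < x_{2,n} < \dots < x_{n,n+1} < x_{n,n} < x_{n+1,n+1} < 1. In particular, the zeros of (1+x)P_n^{(\alpha,\beta)}(x) interlace with the zeros of P_{n+1}^{(\alpha,\beta)}(x). -/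
open Finset

lemma genBinom_succ (a : ℝ) (k : ℕ) :
    ((k : ℝ) + 1) * genBinom a (k + 1) = (a - k) * genBinom a k := by
  unfold genBinom
  rw [Finset.prod_range_succ, Nat.factorial_succ]
  have h1 : ((k + 1).factorial : ℝ) ≠ 0 := by positivity
  have h2 : ((k).factorial : ℝ) ≠ 0 := by positivity
  push_cast [Nat.factorial_succ]
  field_simp

lemma genBinom_succ_succ (a : ℝ) (k : ℕ) :
    ((k : ℝ) + 1) * genBinom (a + 1) (k + 1) = (a + 1) * genBinom a k := by
  unfold genBinom
  rw [Finset.prod_range_succ']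
  have h2 : ((k).factorial : ℝ) ≠ 0 := by positivity
  push_cast [Nat.factorial_succ]
  have : ∀ i ∈ Finset.range k, (a + 1 - ((i:ℝ) + 1)) = a - i := by intro i _; ring
  rw [Finset.prod_congr rfl this]
  field_simp
  ring

lemma genBinom_shift (a : ℝ) (k : ℕ) :
    (a + 1 - k) * genBinom (a + 1) k = (a + 1) * genBinom a k := by
  unfold genBinom
  have h2 : ((k).factorial : ℝ) ≠ 0 := by positivity
  have key : (∏ i ∈ Finset.range k, (a + 1 - i)) * (a + 1 - k) =
      (a + 1) * ∏ i ∈ Finset.range k, (a - i) := by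
    rw [← Finset.prod_range_succ, Finset.prod_range_succ']
    push_cast
    have : ∀ i ∈ Finset.range k, (a + 1 - ((i:ℝ) + 1)) = a - i := by intro i _; ring
    rw [Finset.prod_congr rfl this]; ring
  field_simp
  linarith [key]

lemma S_mid (n j : ℕ) (α β : ℝ) (hβ1 : -2 < β) (hβ2 : β < -1)
    (hj1 : 1 ≤ j) (hjn : j ≤ n) :
    ((2*(n:ℝ)+α+β+2)*(j:ℝ) + ((n:ℝ)+α+β+1)*((n:ℝ)+α+1)) *
        (genBinom ((n:ℝ)+α) (n-j) * genBinom ((n:ℝ)+β) j)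
      + ((2*(n:ℝ)+α+β+2)*((n:ℝ)+1-(j:ℝ)) + ((n:ℝ)+α+β+1)*((n:ℝ)+β+1)) *
        (genBinom ((n:ℝ)+α) (n-j+1) * genBinom ((n:ℝ)+β) (j-1))
      = ((n:ℝ)+1)*((n:ℝ)+α+β+1) *
        (genBinom ((n:ℝ)+1+α) (n+1-j) * genBinom ((n:ℝ)+1+β) j) := by
  have hNJ : ((n - j : ℕ) : ℝ) = (n:ℝ) - (j:ℝ) := by
    exact_mod_cast Nat.cast_sub (R := ℝ) hjn
  set N := (n:ℝ) with hN; set J := (j:ℝ) with hJ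
  set A := genBinom (N+α) (n-j) with hA
  set A' := genBinom (N+α) (n-j+1) with hA'
  set B := genBinom (N+β) j with hB
  set B' := genBinom (N+β) (j-1) with hB'
  set bA := genBinom (N+1+α) (n+1-j) with hbA
  set bB := genBinom (N+1+β) j with hbB
  -- relations
  have e1 : J * B = (N + β - (J-1)) * B' := by
    have := genBinom_succ (N+β) (j-1)
    rw [Nat.sub_add_cancel hj1] at this
    have hc : ((j - 1 : ℕ) : ℝ) = J - 1 := by
      rw [hJ]; exact_mod_cast Nat.cast_sub (R := ℝ) hj1
    rw [hc] at this
    calc J * B = ((J - 1) + 1) * B := by ring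
    _ = (N + β - (J-1)) * B' := this
  have e2 : ((N - J) + 1) * A' = (N + α - (N - J)) * A := by
    have := genBinom_succ (N+α) (n-j)
    rw [hNJ] at this; exact this
  have e3 : ((N - J) + 1) * bA = (N + α + 1) * A := by
    have := genBinom_succ_succ (N+α) (n-j)
    rw [hNJ] at this
    have hidx : n + 1 - j = (n - j) + 1 := by omega
    rw [hbA, hidx, show N + 1 + α = N + α + 1 from by ring]; exact this
  have e4 : (N + β + 1 - J) * bB = (N + β + 1) * B := by
    have := genBinom_shift (N+β) j
    rw [← hJ] at this
    rw [hbB, show N + 1 + β = N + β + 1 from by ring]; exact this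
  -- nonvanishing of the multiplier
  have hJpos : (0:ℝ) < J := by rw [hJ]; exact_mod_cast hj1
  have hNJpos : (0:ℝ) < N + 1 - J := by
    rw [hN, hJ]; have : (j:ℝ) ≤ (n:ℝ) := by exact_mod_cast hjn
    linarith
  have hβJ : N + β + 1 - J ≠ 0 := by
    rcases eq_or_lt_of_le hjn with h | h
    · subst h; intro hc; rw [hN] at hc; nlinarith
    · have : (j:ℝ) + 1 ≤ (n:ℝ) := by exact_mod_cast h
      intro hc; rw [hN, hJ] at hc; nlinarith
  have hM : ((N + 1 - J) * (N + β + 1 - J)) ≠ 0 :=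
    mul_ne_zero (ne_of_gt hNJpos) hβJ
  apply mul_left_cancel₀ hM
  have hA'B' : (N+1-J)*(N+β+1-J)*(A'*B') = (N+α-(N-J))*J*(A*B) := by
    linear_combination ((N+β+1-J)*B') * e2 - ((N + α - (N - J))*A) * e1
  have hbAbB : (N+1-J)*(N+β+1-J)*(bA*bB) = (N+α+1)*(N+β+1)*(A*B) := by
    linear_combination ((N+β+1-J)*bB) * e3 + ((N+α+1)*A) * e4
  linear_combination ((2*N+α+β+2)*(N+1-J) + (N+α+β+1)*(N+β+1)) * hA'B'
    - ((N+1)*(N+α+β+1)) * hbAbB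

lemma assembly (n : ℕ) (c1 c2 b : ℕ → ℝ) (u v : ℝ) (C : ℝ)
    (h0 : c1 0 = C * b 0)
    (htop : c2 n = C * b (n+1))
    (hmid : ∀ k, k < n → c1 (k+1) + c2 k = C * b (k+1)) :
    (∑ k ∈ range (n+1), c1 k * (u^k * v^(n+1-k)))
      + (∑ k ∈ range (n+1), c2 k * (u^(k+1) * v^(n-k)))
    = C * ∑ k ∈ range (n+2), b k * (u^k * v^(n+1-k)) := by
  have h1 := Finset.sum_range_succ' (fun k => c1 k * (u^k * v^(n+1-k))) n
  have h2 := Finset.sum_range_succ (fun k => c2 k * (u^(k+1) * v^(n-k))) n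
  have h3 := Finset.sum_range_succ (fun k => b k * (u^k * v^(n+1-k))) (n+1)
  have h4 := Finset.sum_range_succ' (fun k => b k * (u^k * v^(n+1-k))) n
  have h5 : ∑ k ∈ range n, (c1 (k+1) * (u^(k+1) * v^(n+1-(k+1))) + c2 k * (u^(k+1) * v^(n-k)))
      = ∑ k ∈ range n, C * (b (k+1) * (u^(k+1) * v^(n+1-(k+1)))) := by
    refine Finset.sum_congr rfl (fun k hk => ?_)
    have he : n+1-(k+1) = n-k := by omega
    rw [he]; linear_combination (u^(k+1) * v^(n-k)) * hmid k (mem_range.mp hk)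
  rw [Finset.sum_add_distrib, ← Finset.mul_sum] at h5
  simp only [Nat.sub_self, Nat.sub_zero, pow_zero, one_mul, mul_one, Nat.add_sub_cancel] at *
  rw [h1, h2, h3, h4]
  linear_combination h5 + (v^(n+1))*h0 + (u^(n+1))*htop

noncomputable def jacobiD (n : ℕ) (α β x : ℝ) : ℝ :=
  ∑ k ∈ Finset.range (n + 1),
    ((genBinom ((n : ℝ) + α) (n - k) * genBinom ((n : ℝ) + β) k *
        ((k:ℝ) * ((x - 1) / 2) ^ (k-1) * (1/2))) * ((x + 1) / 2) ^ (n - k)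
     + (genBinom ((n : ℝ) + α) (n - k) * genBinom ((n : ℝ) + β) k *
        ((x - 1) / 2) ^ k) * (((n - k : ℕ):ℝ) * ((x + 1) / 2) ^ (n - k - 1) * (1/2)))

lemma hasDerivAt_jacobiP (n : ℕ) (α β x : ℝ) :
    HasDerivAt (jacobiP n α β) (jacobiD n α β x) x := by
  have h : HasDerivAt (fun x => ∑ k ∈ Finset.range (n + 1),
      genBinom ((n : ℝ) + α) (n - k) * genBinom ((n : ℝ) + β) k *
        ((x - 1) / 2) ^ k * ((x + 1) / 2) ^ (n - k)) (jacobiD n α β x) x := by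
    unfold jacobiD
    refine HasDerivAt.fun_sum (fun k hk => ?_)
    have hu : HasDerivAt (fun x : ℝ => (x - 1) / 2) (1/2) x := by
      simpa using ((hasDerivAt_id x).sub_const 1).div_const 2
    have hv : HasDerivAt (fun x : ℝ => (x + 1) / 2) (1/2) x := by
      simpa using ((hasDerivAt_id x).add_const 1).div_const 2
    have hup := hu.fun_pow k
    have hvp := hv.fun_pow (n - k)
    have hc := hup.const_mul (genBinom ((n : ℝ) + α) (n - k) * genBinom ((n : ℝ) + β) k)
    have := hc.fun_mul hvp
    convert this using 1
  exact h

noncomputable def cOne (n : ℕ) (α β : ℝ) (k : ℕ) : ℝ :=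
  -(2*(2*(n:ℝ)+α+β+2)*(k:ℝ) + ((n:ℝ)+α+β+1)*((2*(n:ℝ)+α+β+2)+α-β)) *
    (genBinom ((n:ℝ)+α) (n-k) * genBinom ((n:ℝ)+β) k)

noncomputable def cTwo (n : ℕ) (α β : ℝ) (k : ℕ) : ℝ :=
  -(2*(2*(n:ℝ)+α+β+2)*((n-k : ℕ):ℝ) + ((n:ℝ)+α+β+1)*((2*(n:ℝ)+α+β+2)-α+β)) *
    (genBinom ((n:ℝ)+α) (n-k) * genBinom ((n:ℝ)+β) k)

noncomputable def bJ (n : ℕ) (α β : ℝ) (k : ℕ) : ℝ :=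
  genBinom ((n:ℝ)+1+α) (n+1-k) * genBinom ((n:ℝ)+1+β) k

lemma h0_lemma (n : ℕ) (α β : ℝ) :
    cOne n α β 0 = (-2*((n:ℝ)+1)*((n:ℝ)+α+β+1)) * bJ n α β 0 := by
  unfold cOne bJ
  rw [show (n:ℝ)+1+α = (n:ℝ)+α+1 from by ring]
  simp only [Nat.sub_zero, Nat.cast_zero, genBinom_zero, mul_one]
  have hb := genBinom_succ_succ ((n:ℝ)+α) n
  linear_combination (2*((n:ℝ)+α+β+1)) * hb

lemma htop_lemma (n : ℕ) (α β : ℝ) :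
    cTwo n α β n = (-2*((n:ℝ)+1)*((n:ℝ)+α+β+1)) * bJ n α β (n+1) := by
  unfold cTwo bJ
  rw [show (n:ℝ)+1+β = (n:ℝ)+β+1 from by ring]
  simp only [Nat.sub_self, Nat.cast_zero, genBinom_zero, one_mul,
    Nat.add_sub_cancel_left, Nat.add_sub_cancel]
  have hb := genBinom_succ_succ ((n:ℝ)+β) n
  linear_combination (2*((n:ℝ)+α+β+1)) * hb

lemma hmid_lemma (n : ℕ) (α β : ℝ) (hβ1 : -2 < β) (hβ2 : β < -1) :
    ∀ k, k < n → cOne n α β (k+1) + cTwo n α β k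
      = (-2*((n:ℝ)+1)*((n:ℝ)+α+β+1)) * bJ n α β (k+1) := by
  intro k hk
  unfold cOne cTwo bJ
  have hs := S_mid n (k+1) α β hβ1 hβ2 (by omega) (by omega)
  rw [show n-(k+1)+1 = n-k from by omega, show (k+1)-1 = k from by omega,
      show n+1-(k+1) = n-k from by omega] at hs
  push_cast at hs
  rw [show n+1-(k+1) = n-k from by omega,
      show ((n-k : ℕ):ℝ) = (n:ℝ)-(k:ℝ) from by
        exact_mod_cast Nat.cast_sub (by omega : k ≤ n)]
  push_cast
  linear_combination (-2) * hs

lemma hQ_lemma (n : ℕ) (α β x : ℝ) :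
    jacobiP (n+1) α β x
      = ∑ k ∈ range (n+2), bJ n α β k * (((x-1)/2)^k * ((x+1)/2)^(n+1-k)) := by
  unfold jacobiP bJ
  refine Finset.sum_congr rfl (fun k hk => ?_)
  push_cast
  ring

lemma hterm_lemma (n : ℕ) (α β x : ℝ) : ∀ k ∈ range (n+1),
    (2*(n:ℝ)+α+β+2) * ((1-x^2) *
      ((genBinom ((n : ℝ) + α) (n - k) * genBinom ((n : ℝ) + β) k *
          ((k:ℝ) * ((x - 1) / 2) ^ (k-1) * (1/2))) * ((x + 1) / 2) ^ (n - k)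
       + (genBinom ((n : ℝ) + α) (n - k) * genBinom ((n : ℝ) + β) k *
          ((x - 1) / 2) ^ k) * (((n - k : ℕ):ℝ) * ((x + 1) / 2) ^ (n - k - 1) * (1/2))))
    - ((n:ℝ)+α+β+1) * ((2*(n:ℝ)+α+β+2)*x + (α-β)) *
      (genBinom ((n : ℝ) + α) (n - k) * genBinom ((n : ℝ) + β) k *
        ((x - 1) / 2) ^ k * ((x + 1) / 2) ^ (n - k))
    = cOne n α β k * (((x-1)/2)^k * ((x+1)/2)^(n+1-k))
      + cTwo n α β k * (((x-1)/2)^(k+1) * ((x+1)/2)^(n-k)) := by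
  intro k hk
  have hkn : k ≤ n := by simpa [Nat.lt_succ_iff] using hk
  unfold cOne cTwo
  rcases Nat.eq_zero_or_pos k with hk0 | hk1
  · subst hk0
    rcases Nat.eq_zero_or_pos n with hn0 | hn1
    · subst hn0; push_cast; ring
    · obtain ⟨m, hm⟩ : ∃ m, n = m + 1 := ⟨n-1, by omega⟩
      subst hm
      simp only [Nat.sub_zero, Nat.add_sub_cancel, Nat.cast_zero, Nat.cast_ofNat]
      rw [show m+1+1 = m+2 from rfl]
      push_cast
      ring
  · obtain ⟨k', hk'⟩ : ∃ k', k = k' + 1 := ⟨k-1, by omega⟩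
    subst hk'
    rcases eq_or_lt_of_le hkn with hkn' | hkn'
    · rw [← hkn']
      simp only [Nat.sub_self, Nat.add_sub_cancel_left, Nat.cast_zero,
        Nat.succ_sub_succ, Nat.zero_sub, Nat.sub_zero, genBinom_zero]
      push_cast
      ring
    · obtain ⟨m, hm⟩ : ∃ m, n - (k'+1) = m + 1 := ⟨n-(k'+1)-1, by omega⟩
      rw [show k'+1-1 = k' from by omega, hm,
          show m+1-1 = m from rfl,
          show n+1-(k'+1) = m+2 from by omega]
      push_cast
      ring

lemma jacobi_identity (n : ℕ) (α β : ℝ) (hβ1 : -2 < β) (hβ2 : β < -1) (x : ℝ) :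
    (2*(n:ℝ)+α+β+2) * ((1-x^2) * jacobiD n α β x)
      = ((n:ℝ)+α+β+1) * ((2*(n:ℝ)+α+β+2)*x + (α-β)) * jacobiP n α β x
        + (-2*((n:ℝ)+1) * ((n:ℝ)+α+β+1)) * jacobiP (n+1) α β x := by
  have hsplit : (2*(n:ℝ)+α+β+2) * ((1-x^2) * jacobiD n α β x)
      - ((n:ℝ)+α+β+1) * ((2*(n:ℝ)+α+β+2)*x + (α-β)) * jacobiP n α β x
      = ∑ k ∈ range (n+1),
        ((2*(n:ℝ)+α+β+2) * ((1-x^2) *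
          ((genBinom ((n : ℝ) + α) (n - k) * genBinom ((n : ℝ) + β) k *
              ((k:ℝ) * ((x - 1) / 2) ^ (k-1) * (1/2))) * ((x + 1) / 2) ^ (n - k)
           + (genBinom ((n : ℝ) + α) (n - k) * genBinom ((n : ℝ) + β) k *
              ((x - 1) / 2) ^ k) * (((n - k : ℕ):ℝ) * ((x + 1) / 2) ^ (n - k - 1) * (1/2))))
        - ((n:ℝ)+α+β+1) * ((2*(n:ℝ)+α+β+2)*x + (α-β)) *
          (genBinom ((n : ℝ) + α) (n - k) * genBinom ((n : ℝ) + β) k *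
            ((x - 1) / 2) ^ k * ((x + 1) / 2) ^ (n - k))) := by
    unfold jacobiD jacobiP
    rw [Finset.mul_sum, Finset.mul_sum, Finset.mul_sum, ← Finset.sum_sub_distrib]
  rw [Finset.sum_congr rfl (hterm_lemma n α β x), Finset.sum_add_distrib] at hsplit
  have hasm := assembly n (cOne n α β) (cTwo n α β) (bJ n α β) ((x-1)/2) ((x+1)/2)
    (-2*((n:ℝ)+1)*((n:ℝ)+α+β+1)) (h0_lemma n α β) (htop_lemma n α β)
    (hmid_lemma n α β hβ1 hβ2)
  rw [hasm] at hsplit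
  rw [hQ_lemma n α β x]
  linear_combination hsplit

lemma chain_lt (f : ℕ → ℝ) (m : ℕ) (h : ∀ i, 1 ≤ i → i + 1 ≤ m → f i < f (i+1)) :
    ∀ j, j ≤ m → ∀ i, 1 ≤ i → i < j → f i < f j := by
  intro j
  induction j with
  | zero => omega
  | succ j ih =>
    intro hj i hi hij
    rcases eq_or_lt_of_le (Nat.lt_succ_iff.mp hij) with rfl | h'
    · exact h i hi hj
    · exact (ih (by omega) i hi h').trans (h j (by omega) hj)

lemma chain_le (f : ℕ → ℝ) (m : ℕ) (h : ∀ i, 1 ≤ i → i + 1 ≤ m → f i < f (i+1)) :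
    ∀ i j, 1 ≤ i → i ≤ j → j ≤ m → f i ≤ f j := by
  intro i j hi hij hj
  rcases eq_or_lt_of_le hij with rfl | h'
  · exact le_refl _
  · exact le_of_lt (chain_lt f m h j hj i hi h')

lemma prod_pos_iff_even {ι : Type*} [DecidableEq ι] (s : Finset ι) (f : ι → ℝ)
    (h : ∀ i ∈ s, f i ≠ 0) :
    (0 < ∏ i ∈ s, f i) ↔ Even (s.filter (fun i => f i < 0)).card := by
  induction s using Finset.induction_on with
  | empty => simp
  | @insert a s ha ih =>
    have hfa : f a ≠ 0 := h a (mem_insert_self _ _)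
    have hrest : ∀ i ∈ s, f i ≠ 0 := fun i hi => h i (mem_insert_of_mem hi)
    have hPne : (∏ i ∈ s, f i) ≠ 0 := Finset.prod_ne_zero_iff.mpr hrest
    rw [Finset.prod_insert ha, Finset.filter_insert]
    rcases lt_or_gt_of_ne hfa with hneg | hpos
    · rw [if_pos hneg, Finset.card_insert_of_notMem
        (fun hmem => ha (Finset.mem_of_mem_filter _ hmem)), Nat.even_add_one, ← ih hrest]
      constructor
      · intro h' h''; nlinarith
      · intro h'
        rcases hPne.lt_or_gt with h'' | h''
        · nlinarith
        · exact absurd h'' h'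
    · rw [if_neg (by push_neg; linarith), ← ih hrest]
      constructor
      · intro h'
        rcases hPne.lt_or_gt with h'' | h''
        · nlinarith
        · exact h''
      · intro h'; nlinarith

section PolyFact
open Polynomial
lemma genBinom_pos (n k : ℕ) (α : ℝ) (hα : -1 < α) (hk : k ≤ n) :
    0 < genBinom ((n:ℝ) + α) k := by
  unfold genBinom
  apply div_pos
  · apply Finset.prod_pos
    intro i hi
    have : (i:ℝ) ≤ (n:ℝ) - 1 := by
      have : i + 1 ≤ n := by
        have := Finset.mem_range.mp hi; omega
      have : ((i+1 : ℕ):ℝ) ≤ (n:ℝ) := by exact_mod_cast this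
      push_cast at this; linarith
    linarith
  · positivity

lemma jacobiP_one (n : ℕ) (α β : ℝ) : jacobiP n α β 1 = genBinom ((n:ℝ) + α) n := by
  unfold jacobiP
  rw [Finset.sum_eq_single 0]
  · norm_num [genBinom]
  · intro k hk hk0
    have : ((1:ℝ) - 1) / 2 = 0 := by norm_num
    rw [this, zero_pow hk0]; ring
  · intro h; simp at h


lemma aux_deg (a c d e : ℝ) (k m : ℕ) :
    (Polynomial.C a * ((Polynomial.X - Polynomial.C c) * Polynomial.C d) ^ k *
      ((Polynomial.X + Polynomial.C e) * Polynomial.C d) ^ m).natDegree ≤ k + m := by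
  have h1 : ((Polynomial.X - Polynomial.C c) * Polynomial.C d).natDegree ≤ 1 :=
    Polynomial.natDegree_mul_le.trans (by simp)
  have h2 : ((Polynomial.X + Polynomial.C e) * Polynomial.C d).natDegree ≤ 1 :=
    Polynomial.natDegree_mul_le.trans (by simp)
  have hp1 : (((Polynomial.X - Polynomial.C c) * Polynomial.C d) ^ k).natDegree ≤ k :=
    Polynomial.natDegree_pow_le.trans (by nlinarith)
  have hp2 : (((Polynomial.X + Polynomial.C e) * Polynomial.C d) ^ m).natDegree ≤ m :=
    Polynomial.natDegree_pow_le.trans (by nlinarith)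
  refine Polynomial.natDegree_mul_le.trans ?_
  have := Polynomial.natDegree_mul_le
    (p := Polynomial.C a) (q := ((Polynomial.X - Polynomial.C c) * Polynomial.C d) ^ k)
  simp only [Polynomial.natDegree_C, zero_add] at this
  omega

lemma jacobiP_factor (n : ℕ) (α β : ℝ) (hα : -1 < α) (x : ℕ → ℝ)
    (hxroots : ∀ z : ℝ, jacobiP n α β z = 0 ↔ ∃ i, 1 ≤ i ∧ i ≤ n ∧ z = x i)
    (hxlt : ∀ i, 1 ≤ i → i ≤ n → x i < 1)
    (hinj : ∀ i j, 1 ≤ i → i ≤ n → 1 ≤ j → j ≤ n → x i = x j → i = j) :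
    ∃ c : ℝ, 0 < c ∧ ∀ z : ℝ, jacobiP n α β z
      = c * ∏ j ∈ range n, (z - x (j+1)) := by
  classical
  set JP : Polynomial ℝ := ∑ k ∈ range (n + 1),
    Polynomial.C (genBinom ((n : ℝ) + α) (n - k) * genBinom ((n : ℝ) + β) k) *
      ((Polynomial.X - Polynomial.C 1) * Polynomial.C (1/2)) ^ k *
      ((Polynomial.X + Polynomial.C 1) * Polynomial.C (1/2)) ^ (n - k) with hJP
  have heval : ∀ z : ℝ, JP.eval z = jacobiP n α β z := by
    intro z
    rw [hJP, Polynomial.eval_finset_sum]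
    refine Finset.sum_congr rfl (fun k _ => ?_)
    simp only [eval_mul, eval_pow, eval_sub, eval_add, eval_X, eval_C]
    ring
  have hval1 : 0 < JP.eval 1 := by
    rw [heval, jacobiP_one]; exact genBinom_pos n n α hα le_rfl
  have hne : JP ≠ 0 := fun h => by simp [h] at hval1
  have hdeg : JP.natDegree ≤ n := by
    rw [hJP]
    refine Polynomial.natDegree_sum_le_of_forall_le _ _ (fun k hk => ?_)
    have hk' : k ≤ n := by have := Finset.mem_range.mp hk; omega
    exact (aux_deg _ _ _ _ k (n-k)).trans (by omega)
  -- the multiset of roots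
  set M : Multiset ℝ := (range n).val.map (fun j => x (j+1)) with hM
  have hMnodup : M.Nodup := by
    rw [hM]
    refine Multiset.Nodup.map_on ?_ (range n).nodup
    intro i hi j hj hij
    have hi' : i < n := by simpa using hi
    have hj' : j < n := by simpa using hj
    have := hinj (i+1) (j+1) (by omega) (by omega) (by omega) (by omega) hij
    omega
  have hMle : M ≤ JP.roots := by
    rw [Multiset.le_iff_count]
    intro a
    rcases Nat.eq_zero_or_pos (M.count a) with h0 | h1
    · omega
    · have haM : a ∈ M := by
        rw [← Multiset.count_pos]; omega
      have hcount1 : M.count a ≤ 1 := Multiset.nodup_iff_count_le_one.mp hMnodup a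
      have haroot : JP.IsRoot a := by
        rw [hM] at haM
        obtain ⟨j, hj, hja⟩ := Multiset.mem_map.mp haM
        have hj' : j < n := by simpa using hj
        have : jacobiP n α β a = 0 := by
          rw [(hxroots a)]
          exact ⟨j+1, by omega, by omega, hja.symm⟩
        unfold Polynomial.IsRoot
        rw [heval]; exact this
      have : 0 < JP.roots.count a := by
        rw [Polynomial.count_roots]
        exact (Polynomial.rootMultiplicity_pos hne).mpr haroot
      omega
  have hdvd : (M.map (fun a => X - Polynomial.C a)).prod ∣ JP :=
    (Multiset.prod_X_sub_C_dvd_iff_le_roots hne M).mpr hMle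
  obtain ⟨q, hq⟩ := hdvd
  have hprodeq : (M.map (fun a => X - Polynomial.C a)).prod
      = ∏ j ∈ range n, (X - Polynomial.C (x (j+1))) := by
    rw [hM, Multiset.map_map, Finset.prod_eq_multiset_prod]
    rfl
  have hqne : q ≠ 0 := by
    intro h; rw [h, mul_zero] at hq; exact hne hq
  have hmonic : ((M.map (fun a => X - Polynomial.C a)).prod).Monic :=
    Polynomial.monic_multiset_prod_of_monic M _ (fun a _ => Polynomial.monic_X_sub_C a)
  have hdegM : ((M.map (fun a => X - Polynomial.C a)).prod).natDegree = n := by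
    rw [hprodeq, Polynomial.natDegree_prod_of_monic]
    · simp
    · intro j _; exact Polynomial.monic_X_sub_C _
  have hdegq : q.natDegree = 0 := by
    have := Polynomial.natDegree_mul (hmonic.ne_zero) hqne
    rw [← hq, hdegM] at this
    omega
  obtain ⟨c, hc⟩ := Polynomial.natDegree_eq_zero.mp hdegq
  refine ⟨c, ?_, ?_⟩
  · have h1 : JP.eval 1 = (∏ j ∈ range n, (1 - x (j+1))) * c := by
      rw [hq, hprodeq, Polynomial.eval_mul, ← hc]
      simp [Polynomial.eval_prod]
    have hppos : 0 < ∏ j ∈ range n, (1 - x (j+1)) := by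
      apply Finset.prod_pos
      intro j hj
      have := hxlt (j+1) (by omega) (by simpa using Finset.mem_range.mp hj)
      linarith
    rw [h1] at hval1
    by_contra hc0
    push_neg at hc0
    nlinarith
  · intro z
    rw [← heval, hq, hprodeq, Polynomial.eval_mul, ← hc]
    simp [Polynomial.eval_prod]
    ring

end PolyFact

set_option maxHeartbeats 1600000 in
theorem jacobi_quasi_consecutive_interlacing (n : ℕ) (hn : 1 ≤ n) (α β : ℝ)
    (hα : -1 < α) (hβ1 : -2 < β) (hβ2 : β < -1) (x y : ℕ → ℝ)
    -- x : zeros of P_n^{(α,β)}, indexed 1..n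
    (hxmono : ∀ i, 1 ≤ i → i + 1 ≤ n → x i < x (i + 1))
    (hxroots : ∀ z : ℝ, jacobiP n α β z = 0 ↔ ∃ i, 1 ≤ i ∧ i ≤ n ∧ z = x i)
    (hx1 : x 1 < -1)
    (hxin : ∀ i, 2 ≤ i → i ≤ n → x i ∈ Set.Ioo (-1 : ℝ) 1)
    -- y : zeros of P_{n+1}^{(α,β)}, indexed 1..n+1
    (hymono : ∀ i, 1 ≤ i → i + 1 ≤ n + 1 → y i < y (i + 1))
    (hyroots : ∀ z : ℝ, jacobiP (n + 1) α β z = 0 ↔ ∃ i, 1 ≤ i ∧ i ≤ n + 1 ∧ z = y i)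
    (hy1 : y 1 < -1)
    (hyin : ∀ i, 2 ≤ i → i ≤ n + 1 → y i ∈ Set.Ioo (-1 : ℝ) 1) :
    x 1 < y 1 ∧ y 1 < -1 ∧ -1 < y 2 ∧
      (∀ i, 2 ≤ i → i ≤ n → y i < x i) ∧
      (∀ i, 2 ≤ i → i ≤ n → x i < y (i + 1)) ∧
      y (n + 1) < 1 := by
  classical
  have hxlt : ∀ i j, 1 ≤ i → i < j → j ≤ n → x i < x j :=
    fun i j hi hij hj => chain_lt x n hxmono j hj i hi hij
  have hxle : ∀ i j, 1 ≤ i → i ≤ j → j ≤ n → x i ≤ x j := chain_le x n hxmono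
  have hylt : ∀ i j, 1 ≤ i → i < j → j ≤ n+1 → y i < y j :=
    fun i j hi hij hj => chain_lt y (n+1) hymono j hj i hi hij
  have hyle : ∀ i j, 1 ≤ i → i ≤ j → j ≤ n+1 → y i ≤ y j := chain_le y (n+1) hymono
  have hxone : ∀ i, 1 ≤ i → i ≤ n → x i < 1 := by
    intro i h1 h2
    rcases eq_or_lt_of_le h1 with rfl | h
    · linarith
    · exact (hxin i (by omega) h2).2
  have hyone : ∀ i, 1 ≤ i → i ≤ n+1 → y i < 1 := by
    intro i h1 h2
    rcases eq_or_lt_of_le h1 with rfl | h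
    · linarith
    · exact (hyin i (by omega) h2).2
  have hinjx : ∀ i j, 1 ≤ i → i ≤ n → 1 ≤ j → j ≤ n → x i = x j → i = j := by
    intro i j hi hin hj hjn heq
    by_contra hne
    rcases Nat.lt_or_ge i j with h | h
    · have := hxlt i j hi h hjn; linarith
    · have := hxlt j i hj (by omega) hin; linarith
  have hinjy : ∀ i j, 1 ≤ i → i ≤ n+1 → 1 ≤ j → j ≤ n+1 → y i = y j → i = j := by
    intro i j hi hin hj hjn heq
    by_contra hne
    rcases Nat.lt_or_ge i j with h | h
    · have := hylt i j hi h hjn; linarith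
    · have := hylt j i hj (by omega) hin; linarith
  by_cases hg : 0 < (n:ℝ) + α + β + 1
  swap
  · exfalso
    push_neg at hg
    have hn1 : n = 1 := by
      rcases Nat.lt_or_ge n 2 with h | h
      · omega
      · exfalso
        have : (2:ℝ) ≤ (n:ℝ) := by exact_mod_cast h
        linarith
    subst hn1
    have h0 : jacobiP 1 α β (x 1) = 0 := (hxroots (x 1)).mpr ⟨1, le_rfl, le_rfl, rfl⟩
    have hexp : jacobiP 1 α β (x 1)
        = (1+α) * ((x 1 + 1)/2) + (1+β) * ((x 1 - 1)/2) := by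
      unfold jacobiP
      rw [Finset.sum_range_succ, Finset.sum_range_succ, Finset.sum_range_zero]
      norm_num [genBinom]
    rw [hexp] at h0
    norm_num at hg
    nlinarith [hx1, hα, hβ2]
  -- main case
  have hNpos : (0:ℝ) ≤ (n:ℝ) := Nat.cast_nonneg n
  have hE : (0:ℝ) < 2*(n:ℝ)+α+β+2 := by linarith
  obtain ⟨c, hc, hp⟩ := jacobiP_factor n α β hα x hxroots hxone hinjx
  obtain ⟨d, hd, hqf⟩ := jacobiP_factor (n+1) α β hα y hyroots hyone hinjy
  have key : ∀ i, 1 ≤ i → i ≤ n →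
      (-2*((n:ℝ)+1)*((n:ℝ)+α+β+1)) * jacobiP (n+1) α β (x i)
      = (2*(n:ℝ)+α+β+2) * ((1 - (x i)^2) *
          (c * ∏ j ∈ (range n).erase (i-1), (x i - x (j+1)))) := by
    intro i h1 h2
    have hid := jacobi_identity n α β hβ1 hβ2 (x i)
    have hroot : jacobiP n α β (x i) = 0 := (hxroots (x i)).mpr ⟨i, h1, h2, rfl⟩
    have hD1 : HasDerivAt (jacobiP n α β) (jacobiD n α β (x i)) (x i) :=
      hasDerivAt_jacobiP n α β (x i)
    have hfun : jacobiP n α β = fun z => c * ∏ j ∈ range n, (z - x (j+1)) := funext hp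
    have hD2 : HasDerivAt (jacobiP n α β)
        (c * ∑ j ∈ range n, (∏ l ∈ (range n).erase j, (x i - x (l+1))) • (1:ℝ)) (x i) := by
      rw [hfun]
      have hparts : ∀ j ∈ range n, HasDerivAt (fun z : ℝ => z - x (j+1)) (1:ℝ) (x i) :=
        fun j _ => (hasDerivAt_id _).sub_const _
      exact (HasDerivAt.fun_finsetProd hparts).const_mul c
    have hDeq := hD1.unique hD2
    have hcollapse : ∑ j ∈ range n, (∏ l ∈ (range n).erase j, (x i - x (l+1))) • (1:ℝ)
        = ∏ l ∈ (range n).erase (i-1), (x i - x (l+1)) := by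
      rw [Finset.sum_eq_single (i-1)]
      · simp
      · intro j hj hji
        have hzero : ∏ l ∈ (range n).erase j, (x i - x (l+1)) = 0 := by
          apply Finset.prod_eq_zero (i := i-1)
          · exact Finset.mem_erase.mpr ⟨fun hc => hji hc.symm, Finset.mem_range.mpr (by omega)⟩
          · rw [show i-1+1 = i from by omega]; ring
        rw [hzero]; simp
      · intro hmem
        exact absurd (Finset.mem_range.mpr (by omega : i-1 < n)) hmem
    rw [hroot, hDeq, hcollapse] at hid
    linarith [hid]
  have hfacne : ∀ i, 1 ≤ i → i ≤ n →
      (∏ j ∈ (range n).erase (i-1), (x i - x (j+1))) ≠ 0 := by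
    intro i h1 h2
    rw [Finset.prod_ne_zero_iff]
    intro j hj
    have hj' := Finset.mem_erase.mp hj
    have hjr := Finset.mem_range.mp hj'.2
    intro h0
    have heq : x i = x (j+1) := by linarith [sub_eq_zero.mp h0]
    have := hinjx i (j+1) h1 h2 (by omega) (by omega) heq
    omega
  have hx2ne : ∀ i, 1 ≤ i → i ≤ n → (1 - (x i)^2) ≠ 0 := by
    intro i h1 h2
    rcases eq_or_lt_of_le h1 with rfl | h
    · nlinarith [hx1]
    · have := hxin i (by omega) h2
      nlinarith [this.1, this.2]
  have hQne : ∀ i, 1 ≤ i → i ≤ n → jacobiP (n+1) α β (x i) ≠ 0 := by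
    intro i h1 h2 h0
    have hk := key i h1 h2
    rw [h0, mul_zero] at hk
    have : (2*(n:ℝ)+α+β+2) * ((1 - (x i)^2) *
        (c * ∏ j ∈ (range n).erase (i-1), (x i - x (j+1)))) ≠ 0 :=
      mul_ne_zero (ne_of_gt hE) (mul_ne_zero (hx2ne i h1 h2)
        (mul_ne_zero (ne_of_gt hc) (hfacne i h1 h2)))
    exact this hk.symm
  have hxy_ne : ∀ i j, 1 ≤ i → i ≤ n → 1 ≤ j → j ≤ n+1 → x i ≠ y j := by
    intro i j h1 h2 h3 h4 heq
    have hyr : jacobiP (n+1) α β (y j) = 0 := (hyroots (y j)).mpr ⟨j, h3, h4, rfl⟩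
    exact hQne i h1 h2 (heq ▸ hyr)
  -- counting function
  set Nc : ℕ → ℕ := fun i => ((range (n+1)).filter (fun j => y (j+1) < x i)).card with hNc
  have hcardcompl : ∀ i, 1 ≤ i → i ≤ n →
      ((range (n+1)).filter (fun j => x i - y (j+1) < 0)).card = (n+1) - Nc i := by
    intro i h1 h2
    have hfeq : (range (n+1)).filter (fun j => x i - y (j+1) < 0)
        = (range (n+1)).filter (fun j => ¬ (y (j+1) < x i)) := by
      apply Finset.filter_congr
      intro j hj
      have hjr := Finset.mem_range.mp hj
      have hne := hxy_ne i (j+1) h1 h2 (by omega) (by omega)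
      constructor
      · intro hlt hge; linarith
      · intro hge
        rcases lt_trichotomy (x i) (y (j+1)) with h | h | h
        · linarith
        · exact absurd h hne
        · exact absurd h hge
    rw [hfeq]
    have := Finset.card_filter_add_card_filter_not
      (s := range (n+1)) (p := fun j => y (j+1) < x i)
    simp only [Finset.card_range] at this
    simp only [hNc]
    omega
  have hsignq : ∀ i, 1 ≤ i → i ≤ n →
      (0 < jacobiP (n+1) α β (x i) ↔ Even ((n+1) - Nc i)) := by
    intro i h1 h2
    have hne : ∀ j ∈ range (n+1), x i - y (j+1) ≠ 0 := by
      intro j hj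
      have hjr := Finset.mem_range.mp hj
      exact sub_ne_zero.mpr (hxy_ne i (j+1) h1 h2 (by omega) (by omega))
    have hpe := prod_pos_iff_even (range (n+1)) (fun j => x i - y (j+1)) hne
    rw [hqf (x i)]
    have hdp : (0 < d * ∏ j ∈ range (n+1), (x i - y (j+1)))
        ↔ (0 < ∏ j ∈ range (n+1), (x i - y (j+1))) := by
      constructor
      · intro h
        by_contra hP
        push_neg at hP
        nlinarith
      · intro h; exact mul_pos hd h
    rw [hdp, hpe, hcardcompl i h1 h2]
  have hsignS : ∀ i, 1 ≤ i → i ≤ n →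
      (0 < ∏ j ∈ (range n).erase (i-1), (x i - x (j+1)) ↔ Even (n - i)) := by
    intro i h1 h2
    have hne := Finset.prod_ne_zero_iff.mp (hfacne i h1 h2)
    rw [prod_pos_iff_even _ _ hne]
    have hfil : ((range n).erase (i-1)).filter (fun j => x i - x (j+1) < 0)
        = Finset.Ico i n := by
      ext j
      simp only [Finset.mem_filter, Finset.mem_erase, Finset.mem_range, Finset.mem_Ico]
      constructor
      · rintro ⟨⟨hji, hjn⟩, hlt⟩
        refine ⟨?_, hjn⟩
        by_contra hji'
        push_neg at hji'
        have : x (j+1) ≤ x i := hxle (j+1) i (by omega) (by omega) h2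
        linarith
      · rintro ⟨hij, hjn⟩
        refine ⟨⟨by omega, hjn⟩, ?_⟩
        have : x i < x (j+1) := hxlt i (j+1) h1 (by omega) (by omega)
        linarith
    rw [hfil, Nat.card_Ico]
  -- parity relations
  have hNcle : ∀ i, Nc i ≤ n+1 := by
    intro i
    simp only [hNc]
    exact (Finset.card_filter_le _ _).trans (by simp)
  have hpar : ∀ i, 2 ≤ i → i ≤ n → (Nc i) % 2 = i % 2 := by
    intro i h2 hn'
    have hkey := key i (by omega) hn'
    have h1x : 0 < 1 - (x i)^2 := by
      have := hxin i h2 hn'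
      nlinarith [this.1, this.2]
    have hSne := hfacne i (by omega) hn'
    have hiff : (0 < jacobiP (n+1) α β (x i))
        ↔ ¬ (0 < ∏ j ∈ (range n).erase (i-1), (x i - x (j+1))) := by
      constructor
      · intro hQ hS
        have hr : 0 < (2*(n:ℝ)+α+β+2) * ((1 - (x i)^2) *
            (c * ∏ j ∈ (range n).erase (i-1), (x i - x (j+1)))) :=
          mul_pos hE (mul_pos h1x (mul_pos hc hS))
        have hl : (-2*((n:ℝ)+1)*((n:ℝ)+α+β+1)) * jacobiP (n+1) α β (x i) < 0 := by
          apply mul_neg_of_neg_of_pos _ hQ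
          nlinarith
        linarith [hkey]
      · intro hnS
        have hS : ∏ j ∈ (range n).erase (i-1), (x i - x (j+1)) < 0 := by
          rcases hSne.lt_or_gt with h | h
          · exact h
          · exact absurd h hnS
        have hr : (2*(n:ℝ)+α+β+2) * ((1 - (x i)^2) *
            (c * ∏ j ∈ (range n).erase (i-1), (x i - x (j+1)))) < 0 := by
          apply mul_neg_of_pos_of_neg hE
          apply mul_neg_of_pos_of_neg h1x
          exact mul_neg_of_pos_of_neg hc hS
        by_contra hQ
        push_neg at hQ
        have hprod : 0 ≤ (2*((n:ℝ)+1)*((n:ℝ)+α+β+1)) * (-jacobiP (n+1) α β (x i)) :=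
          mul_nonneg (by nlinarith) (by linarith)
        nlinarith [hkey]
    have hle := hNcle i
    rw [hsignq i (by omega) hn', hsignS i (by omega) hn'] at hiff
    rw [Nat.even_sub hle, Nat.even_sub (by omega : i ≤ n)] at hiff
    simp only [Nat.even_iff] at hiff
    omega
  have hpar1 : Nc 1 % 2 = 0 := by
    have hkey := key 1 le_rfl hn
    have h1x : 1 - (x 1)^2 < 0 := by nlinarith [hx1]
    have hSne := hfacne 1 le_rfl hn
    rw [show (1:ℕ)-1 = 0 from rfl] at hkey hSne
    have hiff : (0 < jacobiP (n+1) α β (x 1))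
        ↔ (0 < ∏ j ∈ (range n).erase 0, (x 1 - x (j+1))) := by
      constructor
      · intro hQ
        by_contra hnS
        have hS : ∏ j ∈ (range n).erase 0, (x 1 - x (j+1)) < 0 := by
          push_neg at hnS
          rcases hSne.lt_or_gt with h | h
          · exact h
          · linarith
        have hin : 0 < (1 - (x 1)^2) * (c * ∏ j ∈ (range n).erase 0, (x 1 - x (j+1))) := by
          have h2 : c * ∏ j ∈ (range n).erase 0, (x 1 - x (j+1)) < 0 :=
            mul_neg_of_pos_of_neg hc hS
          exact mul_pos_of_neg_of_neg h1x h2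
        have hr : 0 < (2*(n:ℝ)+α+β+2) * ((1 - (x 1)^2) *
            (c * ∏ j ∈ (range n).erase 0, (x 1 - x (j+1)))) := mul_pos hE hin
        have hl : (-2*((n:ℝ)+1)*((n:ℝ)+α+β+1)) * jacobiP (n+1) α β (x 1) < 0 := by
          apply mul_neg_of_neg_of_pos _ hQ
          nlinarith
        linarith [hkey]
      · intro hS
        have hin : (1 - (x 1)^2) * (c * ∏ j ∈ (range n).erase 0, (x 1 - x (j+1))) < 0 :=
          mul_neg_of_neg_of_pos h1x (mul_pos hc hS)
        have hr : (2*(n:ℝ)+α+β+2) * ((1 - (x 1)^2) *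
            (c * ∏ j ∈ (range n).erase 0, (x 1 - x (j+1)))) < 0 :=
          mul_neg_of_pos_of_neg hE hin
        by_contra hQ
        push_neg at hQ
        have hprod : 0 ≤ (2*((n:ℝ)+1)*((n:ℝ)+α+β+1)) * (-jacobiP (n+1) α β (x 1)) :=
          mul_nonneg (by nlinarith) (by linarith)
        nlinarith [hkey]
    have hle := hNcle 1
    have hs1 := hsignq 1 le_rfl hn
    have hs2 := hsignS 1 le_rfl hn
    rw [show (1:ℕ)-1 = 0 from rfl] at hs2
    rw [hs1, hs2] at hiff
    rw [Nat.even_sub hle, Nat.even_sub (by omega : 1 ≤ n)] at hiff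
    simp only [Nat.even_iff] at hiff
    omega
  have hmono : ∀ i i', 1 ≤ i → i ≤ i' → i' ≤ n → Nc i ≤ Nc i' := by
    intro i i' h1 h2 h3
    simp only [hNc]
    apply Finset.card_le_card
    intro j hj
    have hj' := Finset.mem_filter.mp hj
    exact Finset.mem_filter.mpr ⟨hj'.1, lt_of_lt_of_le hj'.2 (hxle i i' h1 h2 h3)⟩
  have hN1 : Nc 1 ≤ 1 := by
    simp only [hNc]
    have hsub : (range (n+1)).filter (fun j => y (j+1) < x 1) ⊆ {0} := by
      intro j hj
      have hj' := Finset.mem_filter.mp hj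
      have hjr := Finset.mem_range.mp hj'.1
      simp only [Finset.mem_singleton]
      by_contra hj0
      have : (-1:ℝ) < y (j+1) := (hyin (j+1) (by omega) (by omega)).1
      linarith [hj'.2]
    calc ((range (n+1)).filter (fun j => y (j+1) < x 1)).card
        ≤ ({0} : Finset ℕ).card := Finset.card_le_card hsub
      _ = 1 := rfl
  have hge1 : ∀ i, 2 ≤ i → i ≤ n → 1 ≤ Nc i := by
    intro i h2 hn'
    simp only [hNc]
    rw [Nat.one_le_iff_ne_zero, ← Nat.pos_iff_ne_zero, Finset.card_pos]
    refine ⟨0, Finset.mem_filter.mpr ⟨Finset.mem_range.mpr (by omega), ?_⟩⟩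
    have := (hxin i h2 hn').1
    linarith
  have hN10 : Nc 1 = 0 := by omega
  -- Nc i = i for middle indices
  have hlow : ∀ i, 2 ≤ i → i ≤ n → i ≤ Nc i := by
    intro i h2
    induction i, h2 using Nat.le_induction with
    | base =>
      intro hn'
      have := hge1 2 le_rfl hn'
      have := hpar 2 le_rfl hn'
      omega
    | succ i hi ih =>
      intro hn'
      have h1 := ih (by omega)
      have h2' := hmono i (i+1) (by omega) (by omega) hn'
      have h3 := hpar i hi (by omega)
      have h4 := hpar (i+1) (by omega) hn'
      omega
  have hupstep : ∀ k i, 2 ≤ i → i + k ≤ n → Nc i + k ≤ Nc (i+k) := by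
    intro k
    induction k with
    | zero => intro i _ _; simp
    | succ k ih =>
      intro i h2 hik
      have h1 := ih i h2 (by omega)
      have h2' := hmono (i+k) (i+k+1) (by omega) (by omega) (by omega)
      have h3 := hpar (i+k) (by omega) (by omega)
      have h4 := hpar (i+k+1) (by omega) (by omega)
      show Nc i + (k+1) ≤ Nc (i+k+1)
      omega
  have hNc_eq : ∀ i, 2 ≤ i → i ≤ n → Nc i = i := by
    intro i h2 hn'
    have h1 := hupstep (n - i) i h2 (by omega)
    rw [show i + (n-i) = n from by omega] at h1
    have h2' := hpar n (by omega) le_rfl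
    have h3 := hNcle n
    have h4 := hlow i h2 hn'
    omega
  -- conclusions
  refine ⟨?_, hy1, (hyin 2 (by omega) (by omega)).1, ?_, ?_, (hyin (n+1) (by omega) (by omega)).2⟩
  · rcases lt_trichotomy (x 1) (y 1) with h | h | h
    · exact h
    · exact absurd h (hxy_ne 1 1 le_rfl hn le_rfl (by omega))
    · exfalso
      have hmem : 0 ∈ (range (n+1)).filter (fun j => y (j+1) < x 1) :=
        Finset.mem_filter.mpr ⟨Finset.mem_range.mpr (by omega), h⟩
      have : 0 < Nc 1 := by
        simp only [hNc]
        exact Finset.card_pos.mpr ⟨0, hmem⟩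
      omega
  · intro i h2 hn'
    have hNci : Nc i = i := hNc_eq i h2 hn'
    by_contra hcon
    push_neg at hcon
    have hsub : (range (n+1)).filter (fun j => y (j+1) < x i) ⊆ range (i-1) := by
      intro j hj
      have hj' := Finset.mem_filter.mp hj
      have hjr := Finset.mem_range.mp hj'.1
      rw [Finset.mem_range]
      by_contra hj0
      push_neg at hj0
      have : y i ≤ y (j+1) := hyle i (j+1) (by omega) (by omega) (by omega)
      linarith [hj'.2]
    have hcard : Nc i ≤ i - 1 := by
      simp only [hNc]
      calc ((range (n+1)).filter (fun j => y (j+1) < x i)).card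
          ≤ (range (i-1)).card := Finset.card_le_card hsub
        _ = i - 1 := Finset.card_range _
    omega
  · intro i h2 hn'
    have hNci : Nc i = i := hNc_eq i h2 hn'
    rcases lt_trichotomy (x i) (y (i+1)) with h | h | h
    · exact h
    · exact absurd h (hxy_ne i (i+1) (by omega) hn' (by omega) (by omega))
    · exfalso
      have hsub : range (i+1) ⊆ (range (n+1)).filter (fun j => y (j+1) < x i) := by
        intro j hj
        have hjr := Finset.mem_range.mp hj
        refine Finset.mem_filter.mpr ⟨Finset.mem_range.mpr (by omega), ?_⟩
        have : y (j+1) ≤ y (i+1) := hyle (j+1) (i+1) (by omega) (by omega) (by omega)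
        linarith
      have hcard : i + 1 ≤ Nc i := by
        simp only [hNc]
        calc i + 1 = (range (i+1)).card := (Finset.card_range _).symm
          _ ≤ ((range (n+1)).filter (fun j => y (j+1) < x i)).card :=
            Finset.card_le_card hsub
      omega
end

section
/- Let \alpha > -1 and -2 < \beta < -1, and n \geq 1. Suppose the zeros of P_n^{(\alpha,\beta)} are x_{1,n} < -1 < x_{2,n} < \dots < x_{n,n} and the zeros of P_{n-1}^{(\alpha,\beta+1)} are y_1 < \dots < y_{n-1} with x_{1,n} < -1 < y_1 < x_{2,n} < y_2 < \dots < x_{n,n} (interlacing from Lemma 2.2 of the paper). Then P_{n-1}^{(\alpha,\beta+2)} and P_n^{(\alpha,\beta)} have no common zero. -/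
open Finset

lemma genBinom_succ_mul (a : ℝ) (k : ℕ) :
    genBinom a (k + 1) * ((k : ℝ) + 1) = genBinom a k * (a - k) := by
  have h1 : ((k.factorial : ℕ) : ℝ) ≠ 0 := by exact_mod_cast (Nat.factorial_pos k).ne'
  have h2 : ((k : ℝ) + 1) ≠ 0 := by positivity
  simp only [genBinom, Finset.prod_range_succ, Nat.factorial_succ]
  push_cast
  field_simp

lemma genBinom_succ_left (a : ℝ) (k : ℕ) :
    genBinom (a + 1) (k + 1) * ((k : ℝ) + 1) = (a + 1) * genBinom a k := by
  have h1 : ((k.factorial : ℕ) : ℝ) ≠ 0 := by exact_mod_cast (Nat.factorial_pos k).ne'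
  have h2 : ((k : ℝ) + 1) ≠ 0 := by positivity
  have hp : (∏ i ∈ Finset.range (k+1), (a + 1 - (i:ℝ))) =
      (∏ i ∈ Finset.range k, (a - (i:ℝ))) * (a + 1) := by
    rw [Finset.prod_range_succ']
    congr 1
    · apply Finset.prod_congr rfl; intro i _; push_cast; ring
    · push_cast; ring
  simp only [genBinom, Nat.factorial_succ]
  rw [hp]
  push_cast
  field_simp

lemma genBinom_pascal (a : ℝ) (k : ℕ) :
    genBinom (a + 1) k * (a + 1 - k) = genBinom a k * (a + 1) := by
  have h3 : (∏ i ∈ Finset.range k, (a + 1 - (i:ℝ))) * (a + 1 - k)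
      = (∏ i ∈ Finset.range k, (a - (i:ℝ))) * (a + 1) := by
    rw [← Finset.prod_range_succ (fun i => a + 1 - (i:ℝ)) k, Finset.prod_range_succ']
    congr 1
    · apply Finset.prod_congr rfl; intro i _; push_cast; ring
    · push_cast; ring
  simp only [genBinom]
  rw [div_mul_eq_mul_div, div_mul_eq_mul_div, h3]

lemma coeff_main (m k : ℕ) (hk1 : 1 ≤ k) (hk : k ≤ m) (α β : ℝ) (hβ : -2 < β) :
    (α + β + (m:ℝ) + 2) * genBinom ((m:ℝ) + α) (m - k) * genBinom ((m:ℝ) + 2 + β) k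
      = ((m:ℝ) + 1) * genBinom ((m:ℝ) + 1 + α) (m + 1 - k) * genBinom ((m:ℝ) + 1 + β) k
        + (β + 1) * genBinom ((m:ℝ) + α) (m - k) * genBinom ((m:ℝ) + 1 + β) k
        - (β + 1) * genBinom ((m:ℝ) + α) (m + 1 - k) * genBinom ((m:ℝ) + 1 + β) (k - 1) := by
  obtain ⟨kk, rfl⟩ : ∃ kk, k = kk + 1 := ⟨k - 1, by omega⟩
  set j := m - (kk + 1) with hjdef
  have hj1 : m + 1 - (kk + 1) = j + 1 := by omega
  have hk1' : kk + 1 - 1 = kk := by omega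
  rw [hj1, hk1']
  have hsum : (j:ℝ) + ((kk:ℝ) + 1) = (m:ℝ) := by
    exact_mod_cast congrArg (Nat.cast : ℕ → ℝ) (by omega : j + (kk+1) = m)
  have hjr : (j:ℝ) = (m:ℝ) - (kk:ℝ) - 1 := by linarith
  have hA : (m:ℝ) + 1 + α = ((m:ℝ) + α) + 1 := by ring
  have hC : (m:ℝ) + 2 + β = ((m:ℝ) + 1 + β) + 1 := by ring
  rw [hA, hC]
  have e1 := genBinom_succ_left ((m:ℝ) + α) j
  have e2 := genBinom_succ_mul ((m:ℝ) + α) j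
  have e3 := genBinom_succ_mul ((m:ℝ) + 1 + β) kk
  have e4 := genBinom_pascal ((m:ℝ) + 1 + β) (kk + 1)
  push_cast at e4
  rw [hjr] at e1 e2
  have hkk_le : (kk:ℝ) + 1 ≤ (m:ℝ) := by
    have : (0:ℝ) ≤ (j:ℝ) := Nat.cast_nonneg j
    linarith
  have hDne : ((m:ℝ) + 1 + β - (kk:ℝ)) ≠ 0 := by
    have : (0:ℝ) < (m:ℝ) + 1 + β - (kk:ℝ) := by linarith
    linarith
  have hjne : ((m:ℝ) - (kk:ℝ)) ≠ 0 := by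
    have : (0:ℝ) < (m:ℝ) - (kk:ℝ) := by linarith
    linarith
  apply mul_right_cancel₀ (mul_ne_zero hjne hDne)
  linear_combination
    ((α + β + (m:ℝ) + 2) * genBinom ((m:ℝ) + α) j * ((m:ℝ) - (kk:ℝ))) * e4
    - (((m:ℝ) + 1) * genBinom ((m:ℝ) + 1 + β) (kk + 1) * ((m:ℝ) + 1 + β - (kk:ℝ))) * e1
    + ((β + 1) * genBinom ((m:ℝ) + 1 + β) kk * ((m:ℝ) + 1 + β - (kk:ℝ))) * e2
    - ((β + 1) * genBinom ((m:ℝ) + α) j * (α + (kk:ℝ) + 1)) * e3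

lemma jacobi_identity_s17 (m : ℕ) (α β : ℝ) (hβ : -2 < β) (x : ℝ) :
    (x + 1) * (α + β + (m:ℝ) + 2) * jacobiP m α (β + 2) x
      = 2 * ((m:ℝ) + 1) * jacobiP (m + 1) α β x
        + 2 * (β + 1) * jacobiP m α (β + 1) x := by
  obtain ⟨u, hu⟩ : ∃ u : ℝ, u = (x - 1) / 2 := ⟨_, rfl⟩
  obtain ⟨v, hv⟩ : ∃ v : ℝ, v = (x + 1) / 2 := ⟨_, rfl⟩
  have huv : v = u + 1 := by rw [hu, hv]; ring
  have hx1 : x + 1 = 2 * v := by rw [hv]; ring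
  have hmc : ((m + 1 : ℕ) : ℝ) = (m:ℝ) + 1 := by push_cast; ring
  set H : ℕ → ℝ := fun k => if k = 0 then (0:ℝ) else
    2 * (β + 1) * genBinom ((m:ℝ) + α) (m + 1 - k) * genBinom ((m:ℝ) + 1 + β) (k - 1)
      * u ^ k * v ^ (m + 1 - k) with hH
  have hH0 : H 0 = 0 := rfl
  have hHm : H (m + 1) = 2 * ((m:ℝ) + 1) *
      (genBinom ((m:ℝ) + 1 + α) (m + 1 - (m + 1)) * genBinom ((m:ℝ) + 1 + β) (m + 1)
        * u ^ (m + 1) * v ^ (m + 1 - (m + 1))) := by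
    have e3 := genBinom_succ_mul ((m:ℝ) + 1 + β) m
    simp only [hH, if_neg (Nat.succ_ne_zero m), Nat.sub_self, Nat.add_sub_cancel,
      genBinom_zero, pow_zero]
    linear_combination (-2 * u ^ (m + 1)) * e3
  have key : ∀ k ∈ Finset.range (m + 1),
      ((x + 1) * (α + β + (m:ℝ) + 2)) *
        (genBinom ((m:ℝ) + α) (m - k) * genBinom ((m:ℝ) + 2 + β) k * u ^ k * v ^ (m - k))
      = (2 * ((m:ℝ) + 1)) *
          (genBinom ((m:ℝ) + 1 + α) (m + 1 - k) * genBinom ((m:ℝ) + 1 + β) k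
            * u ^ k * v ^ (m + 1 - k))
        + (2 * (β + 1)) *
          (genBinom ((m:ℝ) + α) (m - k) * genBinom ((m:ℝ) + 1 + β) k * u ^ k * v ^ (m - k))
        + (H (k + 1) - H k) := by
    intro k hk
    rw [Finset.mem_range] at hk
    have hk' : k ≤ m := by omega
    have hsub1 : m + 1 - k = (m - k) + 1 := by omega
    have hsub2 : m + 1 - (k + 1) = m - k := by omega
    have hHk1 : H (k + 1) = 2 * (β + 1) * genBinom ((m:ℝ) + α) (m - k)
        * genBinom ((m:ℝ) + 1 + β) k * u ^ (k + 1) * v ^ (m - k) := by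
      simp only [hH, if_neg (Nat.succ_ne_zero k), hsub2, Nat.add_sub_cancel]
    rcases Nat.eq_zero_or_pos k with rfl | hk1
    · have e1 := genBinom_succ_left ((m:ℝ) + α) m
      have hA : (m:ℝ) + 1 + α = ((m:ℝ) + α) + 1 := by ring
      simp only [hH0, hHk1, Nat.sub_zero, pow_zero, genBinom_zero, hA]
      simp only [genBinom_zero, pow_zero, one_mul, mul_one]
      linear_combination ((α + β + (m:ℝ) + 2) * genBinom ((m:ℝ) + α) m * v ^ m) * hx1
        - 2 * v ^ (m + 1) * e1 + (2 * (β + 1) * genBinom ((m:ℝ) + α) m * v ^ m) * huv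
    · have hcm := coeff_main m k hk1 hk' α β hβ
      have hHk : H k = 2 * (β + 1) * genBinom ((m:ℝ) + α) ((m - k) + 1)
          * genBinom ((m:ℝ) + 1 + β) (k - 1) * u ^ k * v ^ ((m - k) + 1) := by
        simp only [hH, if_neg (by omega : k ≠ 0), hsub1]
      rw [hsub1] at hcm
      rw [hHk1, hHk, hsub1]
      linear_combination
        ((α + β + (m:ℝ) + 2) * genBinom ((m:ℝ) + α) (m - k) * genBinom ((m:ℝ) + 2 + β) k
          * u ^ k * v ^ (m - k)) * hx1
        + (2 * v * u ^ k * v ^ (m - k)) * hcm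
        + (2 * (β + 1) * genBinom ((m:ℝ) + α) (m - k) * genBinom ((m:ℝ) + 1 + β) k
            * u ^ k * v ^ (m - k)) * huv
  have hLHS : (x + 1) * (α + β + (m:ℝ) + 2) * jacobiP m α (β + 2) x
      = ∑ k ∈ Finset.range (m + 1), ((x + 1) * (α + β + (m:ℝ) + 2)) *
          (genBinom ((m:ℝ) + α) (m - k) * genBinom ((m:ℝ) + 2 + β) k * u ^ k * v ^ (m - k)) := by
    simp only [jacobiP, show ((m:ℝ) + (β + 2)) = (m:ℝ) + 2 + β from by ring, ← hu, ← hv]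
    rw [Finset.mul_sum]
  have hRHS : 2 * ((m:ℝ) + 1) * jacobiP (m + 1) α β x + 2 * (β + 1) * jacobiP m α (β + 1) x
      = (∑ k ∈ Finset.range (m + 1), (2 * ((m:ℝ) + 1)) *
          (genBinom ((m:ℝ) + 1 + α) (m + 1 - k) * genBinom ((m:ℝ) + 1 + β) k
            * u ^ k * v ^ (m + 1 - k)))
        + (∑ k ∈ Finset.range (m + 1), (2 * (β + 1)) *
          (genBinom ((m:ℝ) + α) (m - k) * genBinom ((m:ℝ) + 1 + β) k * u ^ k * v ^ (m - k)))
        + 2 * ((m:ℝ) + 1) *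
          (genBinom ((m:ℝ) + 1 + α) (m + 1 - (m + 1)) * genBinom ((m:ℝ) + 1 + β) (m + 1)
            * u ^ (m + 1) * v ^ (m + 1 - (m + 1))) := by
    simp only [jacobiP, hmc, show ((m:ℝ) + (β + 1)) = (m:ℝ) + 1 + β from by ring, ← hu, ← hv]
    rw [Finset.sum_range_succ, mul_add, Finset.mul_sum, Finset.mul_sum]
    ring
  rw [hLHS, hRHS, Finset.sum_congr rfl key, Finset.sum_add_distrib, Finset.sum_add_distrib,
    Finset.sum_range_sub, hH0, hHm]
  ring

theorem jacobi_coprime_shift_two (n : ℕ) (hn : 1 ≤ n) (α β : ℝ)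
    (hα : -1 < α) (hβ1 : -2 < β) (hβ2 : β < -1) (x y : ℕ → ℝ)
    -- x : zeros of P_n^{(α,β)}, indexed 1..n
    (hxroots : ∀ z : ℝ, jacobiP n α β z = 0 ↔ ∃ i, 1 ≤ i ∧ i ≤ n ∧ z = x i)
    (hx1 : x 1 < -1)
    -- y : zeros of P_{n-1}^{(α,β+1)}, indexed 1..n-1
    (hyroots : ∀ z : ℝ, jacobiP (n - 1) α (β + 1) z = 0 ↔
      ∃ i, 1 ≤ i ∧ i ≤ n - 1 ∧ z = y i)
    (hy1 : -1 < y 1)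
    -- interlacing: x_1 < -1 < y_1 < x_2 < y_2 < ... < x_n
    (hyx : ∀ i, 1 ≤ i → i ≤ n - 1 → y i < x (i + 1))
    (hxy : ∀ i, 2 ≤ i → i ≤ n - 1 → x i < y i) :
    ∀ z : ℝ, ¬ (jacobiP n α β z = 0 ∧ jacobiP (n - 1) α (β + 2) z = 0) := by
  -- monotonicity lemmas
  have M1 : ∀ j, 2 ≤ j → j ≤ n - 1 → ∀ i, j ≤ i → i ≤ n - 1 → x j < y i := by
    intro j hj2 hjn
    refine Nat.le_induction ?_ ?_
    · exact fun _ => hxy j hj2 hjn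
    · intro i hi IH h1
      have h2 : i ≤ n - 1 := by omega
      calc x j < y i := IH h2
        _ < x (i + 1) := hyx i (by omega) h2
        _ < y (i + 1) := hxy (i + 1) (by omega) h1
  have M2 : ∀ i, 1 ≤ i → i ≤ n - 1 → ∀ j, i + 1 ≤ j → j ≤ n → y i < x j := by
    intro i h1 h2
    refine Nat.le_induction ?_ ?_
    · exact fun _ => hyx i h1 h2
    · intro j hj IH hle
      have hj2 : 2 ≤ j := by omega
      have hjn : j ≤ n - 1 := by omega
      calc y i < x j := IH (by omega)
        _ < y j := hxy j hj2 hjn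
        _ < x (j + 1) := hyx j (by omega) hjn
  have Y : ∀ i, 1 ≤ i → i ≤ n - 1 → -1 < y i := by
    intro i h1 h2
    rcases Nat.lt_or_ge i 2 with h | h
    · have : i = 1 := by omega
      rw [this]; exact hy1
    · have h3 : x 2 < y i := M1 2 le_rfl (by omega) i h (by omega)
      have h4 : y 1 < x 2 := hyx 1 le_rfl (by omega)
      linarith
  intro z ⟨h1, h2⟩
  have hid := jacobi_identity_s17 (n - 1) α β hβ1 z
  have hn1 : n - 1 + 1 = n := by omega
  rw [hn1] at hid
  rw [h1, h2] at hid
  have h3 : jacobiP (n - 1) α (β + 1) z = 0 := by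
    have hb : β + 1 ≠ 0 := by linarith
    have : 2 * (β + 1) * jacobiP (n - 1) α (β + 1) z = 0 := by linarith
    rcases mul_eq_zero.mp this with h | h
    · exact absurd h (by intro hh; rcases mul_eq_zero.mp hh with h' | h' <;> [linarith; exact hb h'])
    · exact h
  obtain ⟨i, hi1, hi2, hzi⟩ := (hyroots z).mp h3
  obtain ⟨j, hj1, hj2, hzj⟩ := (hxroots z).mp h1
  have hyx_eq : y i = x j := by rw [← hzi, ← hzj]
  rcases Nat.lt_or_ge j 2 with hj | hj
  · have : j = 1 := by omega
    rw [this] at hyx_eq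
    have := Y i hi1 hi2
    linarith
  · rcases le_or_gt j i with h | h
    · have := M1 j hj (by omega) i h hi2
      linarith
    · have := M2 i hi1 hi2 j (by omega) hj2
      linarith
end
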